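/- arXiv:2305.13211 — 6 statements merged into one kernel-verified Lean document; each statement's English description precedes it below -/
import Mathlib

section
/- The function ι(K̃) = ((1/2)√(1+18K̃) + 1/2)^{1/3} − ((1/2)√(1+18K̃) − 1/2)^{1/3} takes values in (0,1) for all K̃ > 0, is strictly decreasing on (0,∞), and satisfies lim_{K̃→0⁺} ι(K̃) = 1 and lim_{K̃→+∞} ι(K̃) = 0. -/
noncomputable def iota (K : ℝ) : ℝ :=
  ((1/2) * Real.sqrt (1 + 18*K) + 1/2) ^ ((1:ℝ)/3)
    - ((1/2) * Real.sqrt (1 + 18*K) - 1/2) ^ ((1:ℝ)/3)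

open Filter Real Set

noncomputable def xf (K : ℝ) : ℝ := ((1/2) * Real.sqrt (1 + 18*K) + 1/2) ^ ((1:ℝ)/3)
noncomputable def yf (K : ℝ) : ℝ := ((1/2) * Real.sqrt (1 + 18*K) - 1/2) ^ ((1:ℝ)/3)

lemma iota_eq (K : ℝ) : iota K = xf K - yf K := rfl

lemma sqrt_gt (K : ℝ) (hK : 0 < K) : 1 < Real.sqrt (1 + 18*K) := by
  have : (1:ℝ) = Real.sqrt 1 := by simp
  rw [this]
  exact Real.sqrt_lt_sqrt (by norm_num) (by linarith)

lemma cube_rt (x : ℝ) (hx : 0 ≤ x) : (x ^ ((1:ℝ)/3)) ^ 3 = x := by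
  rw [← Real.rpow_natCast (x ^ ((1:ℝ)/3)) 3, ← Real.rpow_mul hx]
  norm_num

lemma xf_cube (K : ℝ) (hK : 0 < K) : xf K ^ 3 = (1/2) * Real.sqrt (1 + 18*K) + 1/2 := by
  have h := sqrt_gt K hK
  exact cube_rt _ (by linarith)

lemma yf_cube (K : ℝ) (hK : 0 < K) : yf K ^ 3 = (1/2) * Real.sqrt (1 + 18*K) - 1/2 := by
  have h := sqrt_gt K hK
  exact cube_rt _ (by linarith)

lemma xf_gt_one (K : ℝ) (hK : 0 < K) : 1 < xf K := by
  have h := sqrt_gt K hK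
  exact Real.one_lt_rpow_iff_of_pos (by linarith) |>.2 (Or.inl ⟨by linarith, by norm_num⟩)

lemma yf_pos (K : ℝ) (hK : 0 < K) : 0 < yf K := by
  have h := sqrt_gt K hK
  exact Real.rpow_pos_of_pos (by linarith) _

lemma yf_lt_xf (K : ℝ) (hK : 0 < K) : yf K < xf K := by
  have h := sqrt_gt K hK
  exact Real.rpow_lt_rpow (by linarith) (by linarith) (by norm_num)

lemma cube_diff (K : ℝ) (hK : 0 < K) : xf K ^ 3 - yf K ^ 3 = 1 := by
  rw [xf_cube K hK, yf_cube K hK]; ring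

theorem iota_properties :
    (∀ K ∈ Set.Ioi (0:ℝ), iota K ∈ Set.Ioo (0:ℝ) 1) ∧
    StrictAntiOn iota (Set.Ioi (0:ℝ)) ∧
    Filter.Tendsto iota (nhdsWithin 0 (Set.Ioi (0:ℝ))) (nhds 1) ∧
    Filter.Tendsto iota Filter.atTop (nhds 0) := by
  refine ⟨?_, ?_, ?_, ?_⟩
  · intro K hK
    rw [Set.mem_Ioi] at hK
    have h1 := xf_gt_one K hK
    have h2 := yf_pos K hK
    have h3 := yf_lt_xf K hK
    have h4 := cube_diff K hK
    rw [iota_eq]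
    constructor
    · linarith
    · nlinarith [sq_nonneg (xf K + yf K), sq_nonneg (xf K - yf K), mul_pos h2 (lt_trans one_pos h1)]
  · intro K1 hK1 K2 hK2 h12
    rw [Set.mem_Ioi] at hK1 hK2
    have hx1 := xf_gt_one K1 hK1
    have hy1 := yf_pos K1 hK1
    have hxy1 := yf_lt_xf K1 hK1
    have hc1 := cube_diff K1 hK1
    have hx2 := xf_gt_one K2 hK2
    have hy2 := yf_pos K2 hK2
    have hxy2 := yf_lt_xf K2 hK2
    have hc2 := cube_diff K2 hK2
    have hs : Real.sqrt (1 + 18*K1) < Real.sqrt (1 + 18*K2) :=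
      Real.sqrt_lt_sqrt (by linarith) (by linarith)
    have hxx : xf K1 < xf K2 := by
      have h := sqrt_gt K1 hK1
      exact Real.rpow_lt_rpow (by linarith) (by linarith) (by norm_num)
    have hyy : yf K1 < yf K2 := by
      have h := sqrt_gt K1 hK1
      exact Real.rpow_lt_rpow (by linarith) (by linarith) (by norm_num)
    rw [iota_eq, iota_eq]
    set x1 := xf K1; set y1 := yf K1; set x2 := xf K2; set y2 := yf K2
    have hS1 : (0:ℝ) < x1^2 + x1*y1 + y1^2 := by nlinarith
    have hS2 : (0:ℝ) < x2^2 + x2*y2 + y2^2 := by nlinarith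
    have hS12 : x1^2 + x1*y1 + y1^2 < x2^2 + x2*y2 + y2^2 := by nlinarith
    have hk1 : (x1 - y1) * (x1^2 + x1*y1 + y1^2) = 1 := by linear_combination hc1
    have hk2 : (x2 - y2) * (x2^2 + x2*y2 + y2^2) = 1 := by linear_combination hc2
    have e1 : x1 - y1 = 1 / (x1^2 + x1*y1 + y1^2) := by
      field_simp at hk1 ⊢; linarith
    have e2 : x2 - y2 = 1 / (x2^2 + x2*y2 + y2^2) := by
      field_simp at hk2 ⊢; linarith
    rw [e1, e2]
    apply one_div_lt_one_div_of_lt hS1 hS12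
  · have hc : ContinuousAt iota 0 := by
      have hs : ContinuousAt (fun K : ℝ => (1/2) * Real.sqrt (1 + 18*K) + 1/2) 0 := by
        fun_prop
      have hs' : ContinuousAt (fun K : ℝ => (1/2) * Real.sqrt (1 + 18*K) - 1/2) 0 := by
        fun_prop
      have hv1 : (fun K : ℝ => (1/2) * Real.sqrt (1 + 18*K) + 1/2) 0 = 1 := by
        norm_num
      have hv2 : (fun K : ℝ => (1/2) * Real.sqrt (1 + 18*K) - 1/2) 0 = 0 := by
        norm_num
      exact (hs.rpow_const (Or.inr (by norm_num))).sub (hs'.rpow_const (Or.inr (by norm_num)))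
    have h0 : iota 0 = 1 := by
      unfold iota
      norm_num
    rw [← h0]
    exact hc.continuousWithinAt.tendsto
  · have hub : Tendsto (fun K : ℝ => (((1/2) * Real.sqrt (1 + 18*K) + 1/2) ^ ((2:ℝ)/3))⁻¹)
        atTop (nhds 0) := by
      apply Tendsto.inv_tendsto_atTop
      apply (tendsto_rpow_atTop (by norm_num : (0:ℝ) < 2/3)).comp
      have hsq : Tendsto (fun K : ℝ => Real.sqrt (1 + 18*K)) atTop atTop := by
        have h1 : Tendsto (fun K : ℝ => (1 + 18*K) ^ ((1:ℝ)/2)) atTop atTop :=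
          (tendsto_rpow_atTop (by norm_num : (0:ℝ) < 1/2)).comp
            (tendsto_atTop_add_const_left _ 1
              ((tendsto_const_mul_atTop_of_pos (by norm_num : (0:ℝ) < 18)).2 tendsto_id))
        exact h1.congr (fun K => (Real.sqrt_eq_rpow _).symm)
      have : Tendsto (fun K : ℝ => (1/2) * Real.sqrt (1 + 18*K) + 1/2) atTop atTop := by
        apply tendsto_atTop_add_const_right
        exact (tendsto_const_mul_atTop_of_pos (by norm_num)).2 hsq
      exact this
    apply tendsto_of_tendsto_of_tendsto_of_le_of_le' tendsto_const_nhds hub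
    · filter_upwards [eventually_gt_atTop (0:ℝ)] with K hK
      have := (yf_lt_xf K hK)
      rw [iota_eq]; linarith
    · filter_upwards [eventually_gt_atTop (0:ℝ)] with K hK
      have hx1 := xf_gt_one K hK
      have hy1 := yf_pos K hK
      have hxy := yf_lt_xf K hK
      have hc := cube_diff K hK
      have hx2 : xf K ^ 2 = ((1/2) * Real.sqrt (1 + 18*K) + 1/2) ^ ((2:ℝ)/3) := by
        have h := sqrt_gt K hK
        rw [← Real.rpow_natCast (xf K) 2]
        unfold xf
        rw [← Real.rpow_mul (by linarith)]
        norm_num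
      rw [iota_eq, ← hx2, ← one_div]
      rw [le_div_iff₀ (by positivity)]
      nlinarith [mul_pos hy1 (lt_trans one_pos hx1), sq_nonneg (yf K)]
end

section
/- Let f : [1, t₁) → ℝ be a C² solution of f''(t) + (a/t) f'(t) − (b/t²) f(t)(1+f(t)) − c (f'(t))²/(1+f(t)) = 0 with f(1) = β > 0, f'(1) = β₀ > 0, where a > 1, b > 0, 1 < c < 3/2. Then f'(t) = B⁻¹ t^{−a} g(t)^{−b/A} (1+f(t))^{c} > 0 for all t ∈ [1, t₁), where B = (1+β)^c / β₀ and g(t) = exp(−A ∫₁ᵗ f(s)(f(s)+1)/(s² f'(s)) ds) with A > 0 a constant. -/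
open Set MeasureTheory


private lemma aux_contOn_deriv (t₁ : ℝ) (f : ℝ → ℝ)
    (hf : ContDiffOn ℝ 2 f (Set.Ico 1 t₁)) (hne : deriv f 1 ≠ 0) :
    ContinuousOn (deriv f) (Set.Ico 1 t₁) := by
  have hu := uniqueDiffOn_Ico (1:ℝ) t₁
  have hF1 : ContDiffOn ℝ 1 (derivWithin f (Set.Ico 1 t₁)) (Set.Ico 1 t₁) :=
    hf.derivWithin hu (by norm_num)
  have heq : Set.EqOn (derivWithin f (Set.Ico 1 t₁)) (deriv f) (Set.Ico 1 t₁) := by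
    intro x hx
    rcases eq_or_lt_of_le hx.1 with h1 | h1
    · subst h1
      exact DifferentiableAt.derivWithin (differentiableAt_of_deriv_ne_zero hne) (hu _ hx)
    · exact derivWithin_of_mem_nhds
        (Filter.mem_of_superset (Ioo_mem_nhds h1 hx.2) Ioo_subset_Ico_self)
  exact hF1.continuousOn.congr heq.symm

private lemma aux_hasDerivAt (t₁ : ℝ) (f : ℝ → ℝ)
    (hf : ContDiffOn ℝ 2 f (Set.Ico 1 t₁)) (x : ℝ) (hx : x ∈ Set.Ioo 1 t₁) :
    HasDerivAt f (deriv f x) x ∧ HasDerivAt (deriv f) (deriv (deriv f) x) x := by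
  have hu := uniqueDiffOn_Ico (1:ℝ) t₁
  have hmem : Set.Ico (1:ℝ) t₁ ∈ nhds x :=
    Filter.mem_of_superset (Ioo_mem_nhds hx.1 hx.2) Ioo_subset_Ico_self
  constructor
  · exact (((hf.differentiableOn (by norm_num)) x
      (Ioo_subset_Ico_self hx)).differentiableAt hmem).hasDerivAt
  · have hF1 : ContDiffOn ℝ 1 (derivWithin f (Set.Ico 1 t₁)) (Set.Ico 1 t₁) :=
      hf.derivWithin hu (by norm_num)
    have hFd : DifferentiableAt ℝ (derivWithin f (Set.Ico 1 t₁)) x :=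
      ((hF1.differentiableOn (by norm_num)) x (Ioo_subset_Ico_self hx)).differentiableAt hmem
    have hev : derivWithin f (Set.Ico 1 t₁) =ᶠ[nhds x] deriv f := by
      filter_upwards [Ioo_mem_nhds hx.1 hx.2] with y hy
      exact derivWithin_of_mem_nhds
        (Filter.mem_of_superset (Ioo_mem_nhds hy.1 hy.2) Ioo_subset_Ico_self)
    exact (hFd.congr_of_eventuallyEq hev.symm).hasDerivAt

private lemma psi_eq (a b c β β₀ t₁ : ℝ) (f : ℝ → ℝ)
    (hf : ContDiffOn ℝ 2 f (Set.Ico 1 t₁))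
    (hode : ∀ t ∈ Set.Ico (1:ℝ) t₁,
      deriv (deriv f) t + (a / t) * deriv f t - (b / t ^ 2) * f t * (1 + f t)
        - c * (deriv f t) ^ 2 / (1 + f t) = 0)
    (hf1 : f 1 = β) (hf1' : deriv f 1 = β₀) (hβ : 0 < β) (hβ₀ : 0 < β₀)
    (t : ℝ) (ht1 : 1 ≤ t) (htl : t < t₁)
    (hpos : ∀ s ∈ Set.Icc (1:ℝ) t, 0 < deriv f s) :
    β ≤ f t ∧ (0 ≤ ∫ s in (1:ℝ)..t, f s * (f s + 1) / (s ^ 2 * deriv f s)) ∧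
    deriv f t * t ^ a * (1 + f t) ^ (-c) *
      Real.exp (-(b * ∫ s in (1:ℝ)..t, f s * (f s + 1) / (s ^ 2 * deriv f s)))
      = β₀ * (1 + β) ^ (-c) := by
  rcases eq_or_lt_of_le ht1 with rfl | htt
  · refine ⟨hf1.ge, by simp, ?_⟩
    simp [intervalIntegral.integral_same, hf1, hf1', Real.one_rpow]
  set G : ℝ → ℝ := fun s => f s * (f s + 1) / (s ^ 2 * deriv f s) with hGdef
  have hIsub : Set.Icc (1:ℝ) t ⊆ Set.Ico 1 t₁ := fun s hs => ⟨hs.1, lt_of_le_of_lt hs.2 htl⟩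
  have hfc : ContinuousOn f (Set.Icc 1 t) := (hf.continuousOn).mono hIsub
  have hFc : ContinuousOn (deriv f) (Set.Icc 1 t) :=
    (aux_contOn_deriv t₁ f hf (by rw [hf1']; exact hβ₀.ne')).mono hIsub
  have hdIoo : ∀ x ∈ Set.Ioo (1:ℝ) t, x ∈ Set.Ioo (1:ℝ) t₁ :=
    fun x hx => ⟨hx.1, lt_trans hx.2 htl⟩
  have hmono : MonotoneOn f (Set.Icc 1 t) := by
    apply monotoneOn_of_deriv_nonneg (convex_Icc 1 t) hfc
    · intro x hx
      rw [interior_Icc] at hx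
      exact ((aux_hasDerivAt t₁ f hf x (hdIoo x hx)).1).differentiableAt.differentiableWithinAt
    · intro x hx
      rw [interior_Icc] at hx
      exact (hpos x (Ioo_subset_Icc_self hx)).le
  have hfβ : ∀ s ∈ Set.Icc (1:ℝ) t, β ≤ f s := by
    intro s hs
    rw [← hf1]
    exact hmono ⟨le_refl 1, ht1⟩ hs hs.1
  have h1f : ∀ s ∈ Set.Icc (1:ℝ) t, 0 < 1 + f s := by
    intro s hs
    have := hfβ s hs
    linarith
  have hGpos : ∀ s ∈ Set.Icc (1:ℝ) t, 0 ≤ G s := by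
    intro s hs
    have h1 := hfβ s hs
    have h2 := hpos s hs
    have h3 : 0 < s := lt_of_lt_of_le one_pos hs.1
    have : 0 < s ^ 2 * deriv f s := by positivity
    apply div_nonneg _ this.le
    nlinarith
  have hInonneg : 0 ≤ ∫ s in (1:ℝ)..t, G s := intervalIntegral.integral_nonneg ht1 hGpos
  have hGc : ContinuousOn G (Set.Icc 1 t) := by
    apply ContinuousOn.div (hfc.mul (hfc.add continuousOn_const))
      ((continuousOn_pow 2).mul hFc)
    intro s hs
    have h2 := hpos s hs
    have h3 : (0:ℝ) < s := lt_of_lt_of_le one_pos hs.1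
    exact (mul_pos (pow_pos h3 2) h2).ne'
  -- the conserved quantity
  set ψ : ℝ → ℝ := fun x => deriv f x * x ^ a * (1 + f x) ^ (-c) *
      Real.exp (-(b * ∫ s in (1:ℝ)..x, G s)) with hψdef
  have hIcont : ContinuousOn (fun x => ∫ s in (1:ℝ)..x, G s) (Set.Icc 1 t) := by
    have : IntegrableOn G (Set.uIcc 1 t) := by
      rw [Set.uIcc_of_le ht1]
      exact hGc.integrableOn_compact isCompact_Icc
    have h := intervalIntegral.continuousOn_primitive_interval this
    rwa [Set.uIcc_of_le ht1] at h
  have hψc : ContinuousOn ψ (Set.Icc 1 t) := by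
    apply ContinuousOn.mul
    apply ContinuousOn.mul
    apply ContinuousOn.mul hFc
    · exact continuousOn_id.rpow_const fun x hx => Or.inl (by
        have : (0:ℝ) < x := lt_of_lt_of_le one_pos hx.1
        exact this.ne')
    · exact (continuousOn_const.add hfc).rpow_const fun x hx => Or.inl (h1f x hx).ne'
    · exact Real.continuous_exp.comp_continuousOn (continuousOn_const.mul hIcont).neg
  have hψd : ∀ x ∈ Set.Ioo (1:ℝ) t, HasDerivAt ψ 0 x := by
    intro x hx
    have hx0 : (0:ℝ) < x := lt_trans one_pos hx.1
    have hxI : x ∈ Set.Icc (1:ℝ) t := Ioo_subset_Icc_self hx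
    have hvx : 0 < deriv f x := hpos x hxI
    have hwx : 0 < 1 + f x := h1f x hxI
    obtain ⟨hd1, hd2⟩ := aux_hasDerivAt t₁ f hf x (hdIoo x hx)
    have hd3 : HasDerivAt (fun y : ℝ => y ^ a) (a * x ^ (a - 1)) x :=
      Real.hasDerivAt_rpow_const (Or.inl hx0.ne')
    have hd4 : HasDerivAt (fun y => (1 + f y) ^ (-c))
        (deriv f x * -c * (1 + f x) ^ (-c - 1)) x :=
      (hd1.const_add 1).rpow_const (Or.inl hwx.ne')
    have hd5 : HasDerivAt (fun y => ∫ s in (1:ℝ)..y, G s) (G x) x := by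
      apply intervalIntegral.integral_hasDerivAt_right
      · apply ContinuousOn.intervalIntegrable
        rw [Set.uIcc_of_le hx.1.le]
        exact hGc.mono (Set.Icc_subset_Icc le_rfl hx.2.le)
      · exact (hGc.mono Ioo_subset_Icc_self).stronglyMeasurableAtFilter isOpen_Ioo x hx
      · exact hGc.continuousAt
          (Filter.mem_of_superset (Ioo_mem_nhds hx.1 hx.2) Ioo_subset_Icc_self)
    have hd6 : HasDerivAt (fun y => Real.exp (-(b * ∫ s in (1:ℝ)..y, G s)))
        (Real.exp (-(b * ∫ s in (1:ℝ)..x, G s)) * -(b * G x)) x :=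
      ((hd5.const_mul b).neg).exp
    have total := ((hd2.mul hd3).mul hd4).mul hd6
    convert total using 1
    case e'_4 => rfl
    case e'_5 => rfl
    case e'_8 => rfl
    have hodex := hode x ⟨hx.1.le, lt_trans hx.2 htl⟩
    have hu2 : deriv (deriv f) x = -((a / x) * deriv f x) + (b / x ^ 2) * f x * (1 + f x)
        + c * (deriv f x) ^ 2 / (1 + f x) := by linarith
    have e1 : x ^ (a - 1) = x ^ a / x := by rw [Real.rpow_sub hx0, Real.rpow_one]
    have e2 : (1 + f x) ^ (-c - 1) = (1 + f x) ^ (-c) / (1 + f x) := by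
      rw [Real.rpow_sub hwx, Real.rpow_one]
    rw [hu2, e1, e2, hGdef]
    simp only [Pi.mul_apply]
    have hne1 : x ≠ 0 := hx0.ne'
    have hne2 : deriv f x ≠ 0 := hvx.ne'
    have hne3 : (1 + f x) ≠ 0 := hwx.ne'
    field_simp
    ring
  have hmono2 : MonotoneOn ψ (Set.Icc 1 t) := by
    apply monotoneOn_of_deriv_nonneg (convex_Icc 1 t) hψc
    · intro x hx
      rw [interior_Icc] at hx
      exact ((hψd x hx).differentiableAt).differentiableWithinAt
    · intro x hx
      rw [interior_Icc] at hx
      exact le_of_eq ((hψd x hx).deriv).symm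
  have hanti : AntitoneOn ψ (Set.Icc 1 t) := by
    apply antitoneOn_of_deriv_nonpos (convex_Icc 1 t) hψc
    · intro x hx
      rw [interior_Icc] at hx
      exact ((hψd x hx).differentiableAt).differentiableWithinAt
    · intro x hx
      rw [interior_Icc] at hx
      exact le_of_eq ((hψd x hx).deriv)
  have h1mem : (1:ℝ) ∈ Set.Icc (1:ℝ) t := ⟨le_refl 1, ht1⟩
  have htmem : t ∈ Set.Icc (1:ℝ) t := ⟨ht1, le_refl t⟩
  have hψeq : ψ t = ψ 1 :=
    le_antisymm (hanti h1mem htmem ht1) (hmono2 h1mem htmem ht1)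
  have hψ1 : ψ 1 = β₀ * (1 + β) ^ (-c) := by
    simp [hψdef, intervalIntegral.integral_same, hf1, hf1', Real.one_rpow]
  exact ⟨hfβ t htmem, hInonneg, by rw [← hψ1]; exact hψeq⟩

set_option maxHeartbeats 1000000 in


/-- The expression of `f'` in terms of `f` and `g` for solutions of the ODE
`f'' + (a/t) f' − (b/t²) f(1+f) − c (f')²/(1+f) = 0` with positive data. -/
theorem deriv_formula_of_ode (a b c A β β₀ t₁ B : ℝ) (f g : ℝ → ℝ)
    (ha : 1 < a) (hb : 0 < b) (hc1 : 1 < c) (hc2 : c < 3/2) (hA : 0 < A)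
    (hβ : 0 < β) (hβ₀ : 0 < β₀) (ht₁ : 1 < t₁)
    (hf : ContDiffOn ℝ 2 f (Set.Ico 1 t₁))
    (hode : ∀ t ∈ Set.Ico (1:ℝ) t₁,
      deriv (deriv f) t + (a / t) * deriv f t - (b / t ^ 2) * f t * (1 + f t)
        - c * (deriv f t) ^ 2 / (1 + f t) = 0)
    (hf1 : f 1 = β) (hf1' : deriv f 1 = β₀)
    (hB : B = (1 + β) ^ c / β₀)
    (hg : ∀ t, g t =
      Real.exp (-A * ∫ s in (1:ℝ)..t, f s * (f s + 1) / (s ^ 2 * deriv f s))) :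
    ∀ t ∈ Set.Ico (1:ℝ) t₁,
      deriv f t = B⁻¹ * t ^ (-a) * g t ^ (-(b / A)) * (1 + f t) ^ c ∧
      0 < deriv f t := by
  have hFc : ContinuousOn (deriv f) (Set.Ico 1 t₁) :=
    aux_contOn_deriv t₁ f hf (by rw [hf1']; exact hβ₀.ne')
  have hβ1 : (0:ℝ) < 1 + β := by linarith
  have hpos : ∀ t ∈ Set.Ico (1:ℝ) t₁, 0 < deriv f t := by
    by_contra hcon
    push_neg at hcon
    obtain ⟨t₀, ht₀, ht₀le⟩ := hcon
    set Z := {s : ℝ | s ∈ Set.Ico (1:ℝ) t₁ ∧ deriv f s ≤ 0} with hZdef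
    have hZne : Z.Nonempty := ⟨t₀, ht₀, ht₀le⟩
    have hZbdd : BddBelow Z := ⟨1, fun z hz => hz.1.1⟩
    set τ := sInf Z with hτdef
    have hτlt : τ < t₁ := lt_of_le_of_lt (csInf_le hZbdd ⟨ht₀, ht₀le⟩) ht₀.2
    -- τ > 1
    have h1τ : 1 < τ := by
      have hc1' : ContinuousWithinAt (deriv f) (Set.Ico 1 t₁) 1 := hFc 1 ⟨le_refl 1, ht₁⟩
      have hev : ∀ᶠ s in nhdsWithin 1 (Set.Ico 1 t₁), 0 < deriv f s := by
        apply hc1'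
        rw [hf1']
        exact Ioi_mem_nhds hβ₀
      rw [eventually_nhdsWithin_iff] at hev
      obtain ⟨ε, hε, hball⟩ := Metric.eventually_nhds_iff.mp hev
      have hle : 1 + ε ≤ τ := by
        apply le_csInf hZne
        intro z hz
        by_contra h
        push_neg at h
        have hz1 : 1 ≤ z := hz.1.1
        have hd : dist z 1 < ε := by
          rw [Real.dist_eq, abs_of_nonneg (by linarith)]
          linarith
        exact absurd (hball hd hz.1) (not_lt.mpr hz.2)
      linarith
    have hτmem : τ ∈ Set.Ico (1:ℝ) t₁ := ⟨h1τ.le, hτlt⟩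
    have hposlt : ∀ s, 1 ≤ s → s < τ → 0 < deriv f s := by
      intro s hs1 hsτ
      by_contra h
      push_neg at h
      have hsZ : s ∈ Z := ⟨⟨hs1, lt_trans hsτ hτlt⟩, h⟩
      exact absurd (csInf_le hZbdd hsZ) (not_le.mpr hsτ)
    -- deriv f τ ≤ 0
    have hτle : deriv f τ ≤ 0 := by
      obtain ⟨u, -, hulim, humem⟩ := exists_seq_tendsto_sInf hZne hZbdd
      have h1 : Filter.Tendsto (deriv f ∘ u) Filter.atTop (nhds (deriv f τ)) :=
        (hFc τ hτmem).tendsto.comp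
          (tendsto_nhdsWithin_iff.mpr ⟨hulim, Filter.Eventually.of_forall fun n => (humem n).1⟩)
      exact le_of_tendsto h1 (Filter.Eventually.of_forall fun n => (humem n).2)
    -- lower bound on [1, τ)
    set K := β₀ * (1 + β) ^ (-c) with hKdef
    have hKpos : 0 < K := mul_pos hβ₀ (Real.rpow_pos_of_pos hβ1 _)
    set δ := K * (τ ^ (-a) * (1 + β) ^ c) with hδdef
    have hδpos : 0 < δ :=
      mul_pos hKpos (mul_pos (Real.rpow_pos_of_pos (by linarith) _) (Real.rpow_pos_of_pos hβ1 _))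
    have hlow : ∀ s ∈ Set.Ico (1:ℝ) τ, δ ≤ deriv f s := by
      intro s hs
      have hs1 : (1:ℝ) ≤ s := hs.1
      have hs0 : (0:ℝ) < s := by linarith
      have hsτ : s < τ := hs.2
      obtain ⟨hfs, hInn, hψ⟩ := psi_eq a b c β β₀ t₁ f hf hode hf1 hf1' hβ hβ₀ s hs1
        (lt_trans hsτ hτlt)
        (fun r hr => hposlt r hr.1 (lt_of_le_of_lt hr.2 hsτ))
      have hvs : 0 < deriv f s := hposlt s hs1 hsτ
      have hws : (0:ℝ) < 1 + f s := by linarith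
      have hta : (0:ℝ) < s ^ a := Real.rpow_pos_of_pos hs0 a
      have hQ : (0:ℝ) < (1 + f s) ^ (-c) := Real.rpow_pos_of_pos hws _
      have hEle : Real.exp (-(b * ∫ u in (1:ℝ)..s, f u * (f u + 1) / (u ^ 2 * deriv f u))) ≤ 1 := by
        apply Real.exp_le_one_iff.mpr
        have : 0 ≤ b * ∫ u in (1:ℝ)..s, f u * (f u + 1) / (u ^ 2 * deriv f u) :=
          mul_nonneg hb.le hInn
        linarith
      have hprod : K ≤ deriv f s * s ^ a * (1 + f s) ^ (-c) := by
        nlinarith [mul_pos (mul_pos hvs hta) hQ,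
          Real.exp_pos (-(b * ∫ u in (1:ℝ)..s, f u * (f u + 1) / (u ^ 2 * deriv f u)))]
      have hid : deriv f s = (deriv f s * s ^ a * (1 + f s) ^ (-c)) *
          (s ^ (-a) * (1 + f s) ^ c) := by
        rw [Real.rpow_neg hs0.le, Real.rpow_neg hws.le]
        field_simp
      have hmono1 : τ ^ (-a) ≤ s ^ (-a) :=
        Real.rpow_le_rpow_of_nonpos hs0 hsτ.le (by linarith)
      have hmono2 : (1 + β) ^ c ≤ (1 + f s) ^ c :=
        Real.rpow_le_rpow hβ1.le (by linarith) (by linarith)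
      have h2 : τ ^ (-a) * (1 + β) ^ c ≤ s ^ (-a) * (1 + f s) ^ c :=
        mul_le_mul hmono1 hmono2 (Real.rpow_pos_of_pos hβ1 _).le
          (Real.rpow_pos_of_pos hs0 _).le
      rw [hid, hδdef]
      have hpos2 : (0:ℝ) < τ ^ (-a) * (1 + β) ^ c :=
        mul_pos (Real.rpow_pos_of_pos (by linarith) _) (Real.rpow_pos_of_pos hβ1 _)
      nlinarith [hprod, h2, hKpos, hpos2]
    -- limit: δ ≤ deriv f τ, contradiction
    have hne : (1:ℝ) ≠ τ := h1τ.ne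
    haveI hNB : (nhdsWithin τ (Set.Ico 1 τ)).NeBot := by
      rw [← mem_closure_iff_nhdsWithin_neBot, closure_Ico hne]
      exact ⟨h1τ.le, le_refl τ⟩
    have hlim : Filter.Tendsto (deriv f) (nhdsWithin τ (Set.Ico 1 τ)) (nhds (deriv f τ)) :=
      (hFc τ hτmem).tendsto.mono_left
        (nhdsWithin_mono τ (fun x hx => ⟨hx.1, lt_trans hx.2 hτlt⟩))
    have : δ ≤ deriv f τ :=
      ge_of_tendsto hlim (eventually_nhdsWithin_of_forall hlow)
    linarith
  -- main formula
  intro t ht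
  refine ⟨?_, hpos t ht⟩
  obtain ⟨hfβt, hInn, hψ⟩ := psi_eq a b c β β₀ t₁ f hf hode hf1 hf1' hβ hβ₀ t ht.1 ht.2
    (fun r hr => hpos r ⟨hr.1, lt_of_le_of_lt hr.2 ht.2⟩)
  have ht0 : (0:ℝ) < t := lt_of_lt_of_le one_pos ht.1
  have hwt : (0:ℝ) < 1 + f t := by linarith
  have hg' : g t ^ (-(b / A)) =
      Real.exp (b * ∫ s in (1:ℝ)..t, f s * (f s + 1) / (s ^ 2 * deriv f s)) := by
    rw [hg t, Real.rpow_def_of_pos (Real.exp_pos _), Real.log_exp]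
    congr 1
    field_simp
  have hBinv : B⁻¹ = β₀ * (1 + β) ^ (-c) := by
    rw [hB, inv_div, Real.rpow_neg hβ1.le, div_eq_mul_inv]
  rw [hBinv, hg']
  have e3 : (1 + f t) ^ c = ((1 + f t) ^ (-c))⁻¹ := by
    rw [Real.rpow_neg hwt.le, inv_inv]
  have e4 : Real.exp (b * ∫ s in (1:ℝ)..t, f s * (f s + 1) / (s ^ 2 * deriv f s)) =
      (Real.exp (-(b * ∫ s in (1:ℝ)..t, f s * (f s + 1) / (s ^ 2 * deriv f s))))⁻¹ := by
    rw [Real.exp_neg, inv_inv]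
  rw [Real.rpow_neg ht0.le, e3, e4]
  have hta : (0:ℝ) < t ^ a := Real.rpow_pos_of_pos ht0 a
  have hQ : (0:ℝ) < (1 + f t) ^ (-c) := Real.rpow_pos_of_pos hwt _
  have hE := Real.exp_pos (-(b * ∫ s in (1:ℝ)..t, f s * (f s + 1) / (s ^ 2 * deriv f s)))
  field_simp
  linear_combination hψ
end

section
/- Under the hypotheses of the ODE lemma (f solving f'' + (a/t)f' − (b/t²)f(1+f) − c(f')²/(1+f) = 0 with f(1)=β>0, f'(1)=β₀>0, a>1, b>0, 1<c<3/2), the function g(t) = exp(−A ∫₁ᵗ f(s)(1+f(s))/(s² f'(s)) ds) admits the alternative representation g(t) = (1 + bB ∫₁ᵗ s^{a−2} f(s)(1+f(s))^{1−c} ds)^{−A/b}, takes values in (0,1], satisfies g(1)=1, and is strictly decreasing on [1,t₁). -/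
open Set intervalIntegral

/-- Alternative representation and monotonicity of the time-transform function `g`. -/
theorem g_representation (a b c A β β₀ t₁ B : ℝ) (f g : ℝ → ℝ)
    (ha : 1 < a) (hb : 0 < b) (hc1 : 1 < c) (hc2 : c < 3/2) (hA : 0 < A)
    (hβ : 0 < β) (hβ₀ : 0 < β₀) (ht₁ : 1 < t₁)
    (hf : ContDiffOn ℝ 2 f (Set.Ico 1 t₁))
    (hode : ∀ t ∈ Set.Ico (1:ℝ) t₁,
      deriv (deriv f) t + (a / t) * deriv f t - (b / t ^ 2) * f t * (1 + f t)
        - c * (deriv f t) ^ 2 / (1 + f t) = 0)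
    (hf1 : f 1 = β) (hf1' : deriv f 1 = β₀)
    (hB : B = (1 + β) ^ c / β₀)
    (hg : ∀ t, g t =
      Real.exp (-A * ∫ s in (1:ℝ)..t, f s * (f s + 1) / (s ^ 2 * deriv f s))) :
    (∀ t ∈ Set.Ico (1:ℝ) t₁,
      g t = (1 + b * B * ∫ s in (1:ℝ)..t, s ^ (a - 2) * f s * (1 + f s) ^ (1 - c))
        ^ (-(A / b)) ∧ g t ∈ Set.Ioc (0:ℝ) 1) ∧
    g 1 = 1 ∧ StrictAntiOn g (Set.Ico 1 t₁) := by
  have hβ1 : (0:ℝ) < 1 + β := by linarith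
  have hB0 : 0 < B := by
    rw [hB]; exact div_pos (Real.rpow_pos_of_pos hβ1 c) hβ₀
  -- f is differentiable at 1 (otherwise deriv f 1 = 0 ≠ β₀)
  have hd1 : DifferentiableAt ℝ f 1 := by
    by_contra h
    rw [deriv_zero_of_not_differentiableAt h] at hf1'
    linarith
  -- regularity facts
  have hU : UniqueDiffOn ℝ (Set.Ico (1:ℝ) t₁) := uniqueDiffOn_Ico 1 t₁
  have hmem : ∀ t ∈ Set.Ioo (1:ℝ) t₁, Set.Ico (1:ℝ) t₁ ∈ nhds t := fun t ht =>
    mem_nhds_iff.2 ⟨Set.Ioo 1 t₁, Set.Ioo_subset_Ico_self, isOpen_Ioo, ht⟩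
  have hfc : ContinuousOn f (Set.Ico 1 t₁) := hf.continuousOn
  have hf'c : ContinuousOn (deriv f) (Set.Ico 1 t₁) := by
    have heq : Set.EqOn (derivWithin f (Set.Ico 1 t₁)) (deriv f) (Set.Ico 1 t₁) := by
      intro t ht
      rcases eq_or_lt_of_le ht.1 with h1 | h1
      · rw [← h1]
        exact hd1.derivWithin (hU 1 ⟨le_refl 1, ht₁⟩)
      · exact derivWithin_of_mem_nhds (hmem t ⟨h1, ht.2⟩)
    exact (hf.continuousOn_derivWithin hU (by norm_num)).congr heq.symm
  have hDf : ∀ t ∈ Set.Ioo (1:ℝ) t₁, HasDerivAt f (deriv f t) t := fun t ht =>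
    ((hf.contDiffAt (hmem t ht)).differentiableAt (by norm_num)).hasDerivAt
  have hDf' : ∀ t ∈ Set.Ioo (1:ℝ) t₁, HasDerivAt (deriv f) (deriv (deriv f) t) t := by
    have hdIoo : ContDiffOn ℝ 1 (deriv f) (Set.Ioo 1 t₁) :=
      (hf.mono Set.Ioo_subset_Ico_self).deriv_of_isOpen (m := 1) isOpen_Ioo (by norm_num)
    intro t ht
    exact (((hdIoo t ht).differentiableWithinAt (by norm_num)).differentiableAt
      (isOpen_Ioo.mem_nhds ht)).hasDerivAt
  -- derivative of the auxiliary function h s = s^a * f'(s) * (1+f(s))^(-c)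
  have hDh : ∀ t ∈ Set.Ioo (1:ℝ) t₁, 0 < 1 + f t →
      HasDerivAt (fun s => s ^ a * deriv f s * (1 + f s) ^ (-c))
        (b * t ^ (a-2) * f t * (1 + f t) ^ (1-c)) t := by
    intro t ht hft
    have ht0 : (0:ℝ) < t := lt_trans one_pos ht.1
    have h1 : HasDerivAt (fun s : ℝ => s ^ a) (a * t ^ (a-1)) t :=
      Real.hasDerivAt_rpow_const (Or.inl (ne_of_gt ht0))
    have h2 : HasDerivAt (deriv f) (deriv (deriv f) t) t := hDf' t ht
    have h3 : HasDerivAt (fun s => (1 + f s) ^ (-c))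
        (deriv f t * (-c) * (1 + f t) ^ (-c - 1)) t := by
      have h4 : HasDerivAt (fun s => 1 + f s) (deriv f t) t := (hDf t ht).const_add 1
      exact h4.rpow_const (Or.inl (ne_of_gt hft))
    have hprod := (h1.mul h2).mul h3
    have hodet := hode t (Set.Ioo_subset_Ico_self ht)
    have hdd : deriv (deriv f) t
        = (b / t^2) * f t * (1 + f t) + c * (deriv f t)^2/(1 + f t) - (a/t) * deriv f t := by
      linarith
    refine HasDerivAt.congr_deriv hprod ?_
    simp only [Pi.mul_apply]
    rw [hdd]
    have e1 : t ^ (a-1) = t ^ a / t := by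
      rw [Real.rpow_sub ht0, Real.rpow_one]
    have e2 : t ^ (a-2) = t ^ a / t^2 := by
      rw [Real.rpow_sub ht0, show ((2:ℝ)) = ((2:ℕ):ℝ) by norm_num, Real.rpow_natCast]
    have e3 : (1 + f t) ^ (-c - 1) = (1 + f t) ^ (-c) / (1 + f t) := by
      rw [Real.rpow_sub hft, Real.rpow_one]
    have e4 : (1 + f t) ^ (1 - c) = (1 + f t) * (1 + f t) ^ (-c) := by
      rw [show (1:ℝ) - c = 1 + (-c) by ring, Real.rpow_add hft, Real.rpow_one]
    rw [e1, e2, e3, e4]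
    field_simp
    ring
  -- positivity of deriv f on [1, t₁)
  have hpos : ∀ t ∈ Set.Ico (1:ℝ) t₁, 0 < deriv f t := by
    by_contra hcon
    push_neg at hcon
    obtain ⟨t₀, ht₀, ht₀'⟩ := hcon
    set Z := {t | t ∈ Set.Ico (1:ℝ) t₁ ∧ deriv f t ≤ 0} with hZ
    have hZsub : Z ⊆ Set.Ico 1 t₁ := fun z hz => hz.1
    have hZne : Z.Nonempty := ⟨t₀, ht₀, ht₀'⟩
    have hZbd : BddBelow Z := ⟨1, fun z hz => hz.1.1⟩
    set T := sInf Z with hTdef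
    have hT1 : 1 ≤ T := le_csInf hZne fun z hz => hz.1.1
    have hTlt : T < t₁ := lt_of_le_of_lt (csInf_le hZbd ⟨ht₀, ht₀'⟩) ht₀.2
    have hTmem : T ∈ Set.Ico (1:ℝ) t₁ := ⟨hT1, hTlt⟩
    have hTz : deriv f T ≤ 0 := by
      have hne : (nhdsWithin T Z).NeBot :=
        mem_closure_iff_nhdsWithin_neBot.1 (csInf_mem_closure hZne hZbd)
      have hcw : ContinuousWithinAt (deriv f) Z T := (hf'c T hTmem).mono hZsub
      exact le_of_tendsto hcw (Filter.eventually_of_mem self_mem_nhdsWithin fun z hz => hz.2)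
    have hT1' : 1 < T := by
      rcases eq_or_lt_of_le hT1 with h | h
      · exfalso; rw [← h, hf1'] at hTz; linarith
      · exact h
    have hbefore : ∀ s ∈ Set.Ico (1:ℝ) T, 0 < deriv f s := by
      intro s hs
      by_contra hns
      push_neg at hns
      exact absurd (csInf_le hZbd ⟨⟨hs.1, lt_trans hs.2 hTlt⟩, hns⟩) (not_le.2 hs.2)
    have hsubT : Set.Icc (1:ℝ) T ⊆ Set.Ico 1 t₁ := fun s hs => ⟨hs.1, lt_of_le_of_lt hs.2 hTlt⟩
    have hmonoT : StrictMonoOn f (Set.Icc 1 T) := by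
      apply strictMonoOn_of_deriv_pos (convex_Icc 1 T) (hfc.mono hsubT)
      intro x hx
      rw [interior_Icc] at hx
      exact hbefore x ⟨hx.1.le, hx.2⟩
    have hfT : ∀ s ∈ Set.Icc (1:ℝ) T, β ≤ f s := by
      intro s hs
      rcases eq_or_lt_of_le hs.1 with h | h
      · rw [← h, hf1]
      · rw [← hf1]; exact (hmonoT ⟨le_refl 1, hT1⟩ hs h).le
    have hmonoh : StrictMonoOn (fun s => s ^ a * deriv f s * (1 + f s) ^ (-c)) (Set.Icc 1 T) := by
      apply strictMonoOn_of_deriv_pos (convex_Icc 1 T)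
      · refine (ContinuousOn.mul (ContinuousOn.mul ?_ (hf'c.mono hsubT)) ?_)
        · exact ContinuousOn.rpow_const continuousOn_id fun s hs =>
            Or.inl (ne_of_gt (lt_of_lt_of_le one_pos hs.1))
        · exact (continuousOn_const.add (hfc.mono hsubT)).rpow_const fun s hs =>
            Or.inl (ne_of_gt (by have := hfT s hs; show (0:ℝ) < 1 + f s; linarith))
      · intro x hx
        rw [interior_Icc] at hx
        have hx' : x ∈ Set.Ioo (1:ℝ) t₁ := ⟨hx.1, lt_trans hx.2 hTlt⟩
        have hfx2 : β ≤ f x := hfT x ⟨hx.1.le, hx.2.le⟩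
        have hfx : 0 < 1 + f x := by linarith
        rw [(hDh x hx' hfx).deriv]
        have hx0 : (0:ℝ) < x := lt_trans one_pos hx.1
        have hfx3 : 0 < f x := lt_of_lt_of_le hβ hfx2
        positivity
    have h1T := hmonoh ⟨le_refl 1, hT1⟩ ⟨hT1, le_refl T⟩ hT1'
    simp only at h1T
    rw [Real.one_rpow, hf1', hf1, one_mul] at h1T
    have hpos1 : 0 < β₀ * (1 + β) ^ (-c) := mul_pos hβ₀ (Real.rpow_pos_of_pos hβ1 _)
    have hfTT : 0 < 1 + f T := by have := hfT T ⟨hT1, le_refl T⟩; linarith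
    have hTa : 0 < T ^ a := Real.rpow_pos_of_pos (by linarith) a
    have hTle : T ^ a * deriv f T * (1 + f T) ^ (-c) ≤ 0 := by
      have hm : T ^ a * deriv f T ≤ 0 := mul_nonpos_iff.2 (Or.inl ⟨hTa.le, hTz⟩)
      exact mul_nonpos_iff.2 (Or.inr ⟨hm, (Real.rpow_pos_of_pos hfTT (-c)).le⟩)
    linarith
  -- f ≥ β on [1, t₁)
  have hfsm : StrictMonoOn f (Set.Ico 1 t₁) := by
    apply strictMonoOn_of_deriv_pos (convex_Ico 1 t₁) hfc
    intro x hx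
    rw [interior_Ico] at hx
    exact hpos x (Set.Ioo_subset_Ico_self hx)
  have hfge : ∀ t ∈ Set.Ico (1:ℝ) t₁, β ≤ f t := by
    intro t ht
    rcases eq_or_lt_of_le ht.1 with h1 | h1
    · rw [← h1, hf1]
    · rw [← hf1]
      exact le_of_lt (hfsm ⟨le_refl 1, ht₁⟩ ht h1)
  have hf0 : ∀ t ∈ Set.Ico (1:ℝ) t₁, 0 < 1 + f t := fun t ht => by
    have := hfge t ht; linarith
  -- continuity of the integrands
  have contInt : ContinuousOn (fun s => s ^ (a-2) * f s * (1 + f s) ^ (1-c)) (Set.Ico 1 t₁) := by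
    refine (ContinuousOn.mul (ContinuousOn.mul ?_ hfc) ?_)
    · exact ContinuousOn.rpow_const continuousOn_id fun s hs =>
        Or.inl (ne_of_gt (lt_of_lt_of_le one_pos hs.1))
    · exact (continuousOn_const.add hfc).rpow_const fun s hs => Or.inl (ne_of_gt (hf0 s hs))
  have contI2 : ContinuousOn (fun s => f s * (f s + 1) / (s ^ 2 * deriv f s)) (Set.Ico 1 t₁) := by
    refine ContinuousOn.div (hfc.mul (hfc.add continuousOn_const))
      ((continuousOn_id.pow 2).mul hf'c) fun s hs => ?_
    have hs0 : (0:ℝ) < s := lt_of_lt_of_le one_pos hs.1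
    exact ne_of_gt (mul_pos (pow_pos hs0 2) (hpos s hs))
  -- main FTC identity
  have hFTC : ∀ t ∈ Set.Ico (1:ℝ) t₁,
      t ^ a * deriv f t * (1 + f t) ^ (-c)
        = 1/B + b * ∫ s in (1:ℝ)..t, s ^ (a-2) * f s * (1 + f s) ^ (1-c) := by
    have hOne : (1:ℝ) ^ a * deriv f 1 * (1 + f 1) ^ (-c) = 1/B := by
      rw [Real.one_rpow, hf1', hf1, hB, Real.rpow_neg hβ1.le]
      field_simp
    intro t ht
    rcases eq_or_lt_of_le ht.1 with h1 | h1
    · rw [← h1, intervalIntegral.integral_same, mul_zero, add_zero]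
      exact hOne
    · have hsub : Set.Icc (1:ℝ) t ⊆ Set.Ico 1 t₁ := fun s hs => ⟨hs.1, lt_of_le_of_lt hs.2 ht.2⟩
      have huIcc : Set.uIcc (1:ℝ) t = Set.Icc 1 t := Set.uIcc_of_le ht.1
      have hint : IntervalIntegrable (fun s => b * s ^ (a-2) * f s * (1 + f s) ^ (1-c))
          MeasureTheory.volume 1 t := by
        apply ContinuousOn.intervalIntegrable
        rw [huIcc]
        have : (fun s:ℝ => b * s ^ (a-2) * f s * (1 + f s) ^ (1-c))
            = fun s:ℝ => b * (s ^ (a-2) * f s * (1 + f s) ^ (1-c)) := funext fun s => by ring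
        rw [this]
        exact continuousOn_const.mul (contInt.mono hsub)
      have hconth : ContinuousOn (fun s => s ^ a * deriv f s * (1 + f s) ^ (-c))
          (Set.Icc 1 t) := by
        refine (ContinuousOn.mul (ContinuousOn.mul ?_ (hf'c.mono hsub)) ?_)
        · exact ContinuousOn.rpow_const continuousOn_id fun s hs =>
            Or.inl (ne_of_gt (lt_of_lt_of_le one_pos hs.1))
        · exact (continuousOn_const.add (hfc.mono hsub)).rpow_const fun s hs =>
            Or.inl (ne_of_gt (hf0 s (hsub hs)))
      have heq := intervalIntegral.integral_eq_sub_of_hasDerivAt_of_le ht.1 hconth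
        (fun x hx => hDh x ⟨hx.1, lt_trans hx.2 ht.2⟩
          (hf0 x (hsub ⟨hx.1.le, hx.2.le⟩))) hint
      rw [show (fun s:ℝ => b * s ^ (a-2) * f s * (1 + f s) ^ (1-c))
          = fun s:ℝ => b * (s ^ (a-2) * f s * (1 + f s) ^ (1-c)) from funext fun s => by ring]
        at heq
      rw [intervalIntegral.integral_const_mul] at heq
      rw [hOne] at heq
      linarith
  -- the combination G t = 1 + b B F t, expressed via h
  have hGeq : ∀ t ∈ Set.Ico (1:ℝ) t₁,
      1 + b * B * (∫ s in (1:ℝ)..t, s ^ (a-2) * f s * (1 + f s) ^ (1-c))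
        = B * (t ^ a * deriv f t * (1 + f t) ^ (-c)) := by
    intro t ht
    rw [hFTC t ht]
    field_simp
  have hGpos : ∀ t ∈ Set.Ico (1:ℝ) t₁,
      0 < 1 + b * B * ∫ s in (1:ℝ)..t, s ^ (a-2) * f s * (1 + f s) ^ (1-c) := by
    intro t ht
    rw [hGeq t ht]
    have ht0 : (0:ℝ) < t := lt_of_lt_of_le one_pos ht.1
    exact mul_pos hB0 (mul_pos (mul_pos (Real.rpow_pos_of_pos ht0 a) (hpos t ht))
      (Real.rpow_pos_of_pos (hf0 t ht) (-c)))
  have hintF : ∀ t ∈ Set.Ico (1:ℝ) t₁,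
      IntervalIntegrable (fun s => s ^ (a-2) * f s * (1 + f s) ^ (1-c))
        MeasureTheory.volume 1 t := by
    intro t ht
    apply ContinuousOn.intervalIntegrable
    rw [Set.uIcc_of_le ht.1]
    exact contInt.mono fun s hs => ⟨hs.1, lt_of_le_of_lt hs.2 ht.2⟩
  have hGone : ∀ t ∈ Set.Ico (1:ℝ) t₁,
      1 ≤ 1 + b * B * ∫ s in (1:ℝ)..t, s ^ (a-2) * f s * (1 + f s) ^ (1-c) := by
    intro t ht
    have h0 : 0 ≤ ∫ s in (1:ℝ)..t, s ^ (a-2) * f s * (1 + f s) ^ (1-c) := by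
      apply intervalIntegral.integral_nonneg ht.1
      intro u hu
      have hu' : u ∈ Set.Ico (1:ℝ) t₁ := ⟨hu.1, lt_of_le_of_lt hu.2 ht.2⟩
      have hu0 : (0:ℝ) ≤ u := by linarith [hu.1]
      exact mul_nonneg (mul_nonneg (Real.rpow_nonneg hu0 _)
        (le_trans hβ.le (hfge u hu'))) (Real.rpow_nonneg (hf0 u hu').le _)
    nlinarith [mul_pos hb hB0]
  -- the logarithmic identity for the g-integral
  have hlog : ∀ t ∈ Set.Ico (1:ℝ) t₁,
      (∫ s in (1:ℝ)..t, f s * (f s + 1) / (s ^ 2 * deriv f s))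
        = (1/b) * Real.log (1 + b * B *
            ∫ s in (1:ℝ)..t, s ^ (a-2) * f s * (1 + f s) ^ (1-c)) := by
    intro t ht
    rcases eq_or_lt_of_le ht.1 with h1 | h1
    · rw [← h1]
      simp
    · have hsub : Set.Icc (1:ℝ) t ⊆ Set.Ico 1 t₁ := fun s hs => ⟨hs.1, lt_of_le_of_lt hs.2 ht.2⟩
      have huIcc : Set.uIcc (1:ℝ) t = Set.Icc 1 t := Set.uIcc_of_le ht.1
      have hFcont : ContinuousOn
          (fun u => ∫ s in (1:ℝ)..u, s ^ (a-2) * f s * (1 + f s) ^ (1-c)) (Set.Icc 1 t) := by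
        have h := intervalIntegral.continuousOn_primitive_interval
          (a := 1) (b := t) (f := fun s => s ^ (a-2) * f s * (1 + f s) ^ (1-c))
          (μ := MeasureTheory.volume) ?_
        · rwa [huIcc] at h
        · rw [huIcc]
          exact (contInt.mono hsub).integrableOn_compact isCompact_Icc
      have hφcont : ContinuousOn (fun u => (1/b) * Real.log (1 + b * B *
          ∫ s in (1:ℝ)..u, s ^ (a-2) * f s * (1 + f s) ^ (1-c))) (Set.Icc 1 t) := by
        refine continuousOn_const.mul (ContinuousOn.log
          (continuousOn_const.add (continuousOn_const.mul hFcont)) fun u hu =>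
            ne_of_gt (hGpos u (hsub hu)))
      have hderivφ : ∀ u ∈ Set.Ioo (1:ℝ) t, HasDerivAt
          (fun u => (1/b) * Real.log (1 + b * B *
            ∫ s in (1:ℝ)..u, s ^ (a-2) * f s * (1 + f s) ^ (1-c)))
          (f u * (f u + 1) / (u ^ 2 * deriv f u)) u := by
        intro u hu
        have hu' : u ∈ Set.Ioo (1:ℝ) t₁ := ⟨hu.1, lt_trans hu.2 ht.2⟩
        have humem : u ∈ Set.Ico (1:ℝ) t₁ := Set.Ioo_subset_Ico_self hu'
        have contIntIoo : ContinuousOn (fun s => s ^ (a-2) * f s * (1 + f s) ^ (1-c))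
            (Set.Ioo 1 t₁) := contInt.mono Set.Ioo_subset_Ico_self
        have hF : HasDerivAt (fun x => ∫ s in (1:ℝ)..x, s ^ (a-2) * f s * (1 + f s) ^ (1-c))
            (u ^ (a-2) * f u * (1 + f u) ^ (1-c)) u :=
          intervalIntegral.integral_hasDerivAt_right (hintF u humem)
            (contIntIoo.stronglyMeasurableAtFilter isOpen_Ioo u hu')
            (contIntIoo.continuousAt (isOpen_Ioo.mem_nhds hu'))
        have hG : HasDerivAt (fun x => 1 + b * B *
            ∫ s in (1:ℝ)..x, s ^ (a-2) * f s * (1 + f s) ^ (1-c))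
            (b * B * (u ^ (a-2) * f u * (1 + f u) ^ (1-c))) u :=
          (hF.const_mul (b * B)).const_add 1
        have hL := (hG.log (ne_of_gt (hGpos u humem))).const_mul (1/b)
        refine HasDerivAt.congr_deriv hL ?_
        rw [hGeq u humem]
        have hu0 : (0:ℝ) < u := lt_trans one_pos hu.1
        have hfu : 0 < 1 + f u := hf0 u humem
        have hf'u : 0 < deriv f u := hpos u humem
        have e2 : u ^ (a-2) = u ^ a / u^2 := by
          rw [Real.rpow_sub hu0, show ((2:ℝ)) = ((2:ℕ):ℝ) by norm_num, Real.rpow_natCast]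
        have e4 : (1 + f u) ^ (1 - c) = (1 + f u) * (1 + f u) ^ (-c) := by
          rw [show (1:ℝ) - c = 1 + (-c) by ring, Real.rpow_add hfu, Real.rpow_one]
        rw [e2, e4]
        have hXa : u ^ a ≠ 0 := ne_of_gt (Real.rpow_pos_of_pos hu0 a)
        have hY : (1 + f u) ^ (-c) ≠ 0 := ne_of_gt (Real.rpow_pos_of_pos hfu (-c))
        field_simp
        ring
      have hint2 : IntervalIntegrable (fun s => f s * (f s + 1) / (s ^ 2 * deriv f s))
          MeasureTheory.volume 1 t := by
        apply ContinuousOn.intervalIntegrable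
        rw [huIcc]
        exact contI2.mono hsub
      have heq := intervalIntegral.integral_eq_sub_of_hasDerivAt_of_le ht.1 hφcont hderivφ hint2
      rw [heq]
      simp
  -- representation of g
  have hrep : ∀ t ∈ Set.Ico (1:ℝ) t₁,
      g t = (1 + b * B * ∫ s in (1:ℝ)..t, s ^ (a-2) * f s * (1 + f s) ^ (1-c)) ^ (-(A / b)) := by
    intro t ht
    rw [hg t, hlog t ht, Real.rpow_def_of_pos (hGpos t ht)]
    congr 1
    ring
  refine ⟨fun t ht => ⟨hrep t ht, ?_, ?_⟩, ?_, ?_⟩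
  · rw [hrep t ht]
    exact Real.rpow_pos_of_pos (hGpos t ht) _
  · rw [hrep t ht]
    exact Real.rpow_le_one_of_one_le_of_nonpos (hGone t ht)
      (by rw [neg_nonpos]; positivity)
  · rw [hg 1, intervalIntegral.integral_same, mul_zero, Real.exp_zero]
  · intro x hx y hy hxy
    rw [hrep x hx, hrep y hy]
    have hixy : IntervalIntegrable (fun s => s ^ (a-2) * f s * (1 + f s) ^ (1-c))
        MeasureTheory.volume x y := by
      apply ContinuousOn.intervalIntegrable
      rw [Set.uIcc_of_le hxy.le]
      exact contInt.mono fun s hs => ⟨le_trans hx.1 hs.1, lt_of_le_of_lt hs.2 hy.2⟩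
    have hsplit : (∫ s in (1:ℝ)..y, s ^ (a-2) * f s * (1 + f s) ^ (1-c))
        - (∫ s in (1:ℝ)..x, s ^ (a-2) * f s * (1 + f s) ^ (1-c))
        = ∫ s in x..y, s ^ (a-2) * f s * (1 + f s) ^ (1-c) :=
      intervalIntegral.integral_interval_sub_left (hintF y hy) (hintF x hx)
    have hposxy : 0 < ∫ s in x..y, s ^ (a-2) * f s * (1 + f s) ^ (1-c) := by
      apply intervalIntegral.intervalIntegral_pos_of_pos_on hixy ?_ hxy
      intro u hu
      have hu' : u ∈ Set.Ico (1:ℝ) t₁ := ⟨le_trans hx.1 hu.1.le, lt_trans hu.2 hy.2⟩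
      have hu0 : (0:ℝ) < u := lt_of_lt_of_le one_pos hu'.1
      have hfu : 0 < f u := lt_of_lt_of_le hβ (hfge u hu')
      have hfu1 : 0 < 1 + f u := hf0 u hu'
      positivity
    have hGlt : (1 + b * B * ∫ s in (1:ℝ)..x, s ^ (a-2) * f s * (1 + f s) ^ (1-c))
        < 1 + b * B * ∫ s in (1:ℝ)..y, s ^ (a-2) * f s * (1 + f s) ^ (1-c) := by
      nlinarith [mul_pos hb hB0]
    exact Real.rpow_lt_rpow_of_neg (hGpos x hx) hGlt (neg_lt_zero.2 (div_pos hA hb))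
end

section
/- If f solves the ODE f'' + (a/t)f' − (b/t²)f(1+f) − c(f')²/(1+f) = 0 on [1,t₁) with initial data f(1)=β>0, f'(1)=β₀>0 (a>1, b>0, 1<c<3/2), then f(t) > 0 for all t ∈ [1,t₁). -/
open Set Filter Topology

/-- Positivity of solutions of the ODE with positive initial data. -/
theorem f_pos_of_ode (a b c β β₀ t₁ : ℝ) (f : ℝ → ℝ)
    (ha : 1 < a) (hb : 0 < b) (hc1 : 1 < c) (hc2 : c < 3/2)
    (hβ : 0 < β) (hβ₀ : 0 < β₀) (ht₁ : 1 < t₁)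
    (hf : ContDiffOn ℝ 2 f (Set.Ico 1 t₁))
    (hode : ∀ t ∈ Set.Ico (1:ℝ) t₁,
      deriv (deriv f) t + (a / t) * deriv f t - (b / t ^ 2) * f t * (1 + f t)
        - c * (deriv f t) ^ 2 / (1 + f t) = 0)
    (hf1 : f 1 = β) (hf1' : deriv f 1 = β₀) :
    ∀ t ∈ Set.Ico (1:ℝ) t₁, 0 < f t := by
  set s : Set ℝ := Set.Ico (1:ℝ) t₁ with hs
  have hud : UniqueDiffOn ℝ s := uniqueDiffOn_Ico 1 t₁
  set g : ℝ → ℝ := derivWithin f s with hg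
  have hgc : ContinuousOn g s := hf.continuousOn_derivWithin hud (by norm_num)
  have hgC1 : ContDiffOn ℝ 1 g s := hf.derivWithin hud (by norm_num)
  have hmem1 : (1:ℝ) ∈ s := ⟨le_refl 1, ht₁⟩
  -- deriv f agrees with the within-derivative on s
  have heq : ∀ t ∈ s, deriv f t = g t := by
    intro t ht
    rcases eq_or_lt_of_le ht.1 with h1 | h1
    · rw [← h1]
      by_cases hd : DifferentiableAt ℝ f 1
      · exact (hd.derivWithin (hud 1 hmem1)).symm
      · exfalso
        have h0 := deriv_zero_of_not_differentiableAt hd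
        rw [hf1'] at h0; linarith
    · exact (derivWithin_of_mem_nhds (Ico_mem_nhds h1 ht.2)).symm
  have hg1 : g 1 = β₀ := by rw [← heq 1 hmem1, hf1']
  -- Main claim: g > 0 on s
  have hgpos : ∀ t ∈ s, 0 < g t := by
    by_contra h
    push_neg at h
    obtain ⟨t₀, ht₀s, ht₀⟩ := h
    set Z : Set ℝ := {t ∈ Set.Icc (1:ℝ) t₀ | g t ≤ 0} with hZ
    have hIccsub : Set.Icc (1:ℝ) t₀ ⊆ s := fun x hx =>
      ⟨hx.1, lt_of_le_of_lt hx.2 ht₀s.2⟩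
    have hZc : IsClosed Z := by
      have : Z = Set.Icc (1:ℝ) t₀ ∩ g ⁻¹' Set.Iic 0 := rfl
      rw [this]
      exact (hgc.mono hIccsub).preimage_isClosed_of_isClosed isClosed_Icc isClosed_Iic
    have hZne : Z.Nonempty := ⟨t₀, ⟨ht₀s.1, le_rfl⟩, ht₀⟩
    have hZbdd : BddBelow Z := ⟨1, fun x hx => hx.1.1⟩
    set T : ℝ := sInf Z with hT
    have hTZ : T ∈ Z := hZc.csInf_mem hZne hZbdd
    have hTs : T ∈ s := hIccsub hTZ.1
    have hT1 : 1 < T := by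
      rcases eq_or_lt_of_le hTZ.1.1 with h1 | h1
      · exfalso; have := hTZ.2; rw [← h1, hg1] at this; linarith
      · exact h1
    -- g > 0 on [1, T)
    have hleft : ∀ u ∈ Set.Ico (1:ℝ) T, 0 < g u := by
      intro u hu
      by_contra hle
      push_neg at hle
      have : u ∈ Z := ⟨⟨hu.1, le_trans hu.2.le hTZ.1.2⟩, hle⟩
      exact absurd (csInf_le hZbdd this) (not_le.mpr hu.2)
    -- g T = 0
    have hgT0 : g T = 0 := by
      have hnb : (𝓝[Set.Ico (1:ℝ) T] T).NeBot := by
        rw [← mem_closure_iff_nhdsWithin_neBot, closure_Ico (ne_of_lt hT1)]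
        exact ⟨hT1.le, le_rfl⟩
      have htend : Tendsto g (𝓝[Set.Ico (1:ℝ) T] T) (𝓝 (g T)) := by
        refine (hgc T hTs).mono_left (nhdsWithin_mono _ ?_)
        intro x hx; exact ⟨hx.1, lt_trans hx.2 (lt_of_le_of_lt hTZ.1.2 ht₀s.2)⟩
      have hge : 0 ≤ g T :=
        ge_of_tendsto htend (by
          filter_upwards [self_mem_nhdsWithin] with u hu
          exact (hleft u hu).le)
      linarith [hTZ.2]
    -- f is positive (≥ β) at T
    have hfub : Set.Icc (1:ℝ) T ⊆ s := fun x hx =>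
      ⟨hx.1, lt_of_le_of_lt (le_trans hx.2 hTZ.1.2) ht₀s.2⟩
    have hmono : StrictMonoOn f (Set.Icc (1:ℝ) T) := by
      apply strictMonoOn_of_deriv_pos (convex_Icc 1 T) (hf.continuousOn.mono hfub)
      intro x hx
      rw [interior_Icc] at hx
      have hxs : x ∈ s := hfub ⟨hx.1.le, hx.2.le⟩
      rw [heq x hxs]
      exact hleft x ⟨hx.1.le, hx.2⟩
    have hfT : β < f T := by
      have := hmono ⟨le_rfl, hT1.le⟩ ⟨hT1.le, le_rfl⟩ hT1
      rwa [hf1] at this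
    have hfTpos : 0 < f T := lt_trans hβ hfT
    have h1fT : 0 < 1 + f T := by linarith
    -- T is an interior point
    have hTmem : s ∈ 𝓝 T := Ico_mem_nhds hT1 hTs.2
    -- deriv f T = 0
    have hdfT : deriv f T = 0 := by rw [heq T hTs, hgT0]
    -- g is differentiable at T; set d = deriv g T
    have hgd : DifferentiableAt ℝ g T :=
      ((hgC1.differentiableOn one_ne_zero) T hTs).differentiableAt hTmem
    set d : ℝ := deriv g T with hd
    -- deriv (deriv f) T = d
    have hevq : deriv f =ᶠ[𝓝 T] g := by
      filter_upwards [hTmem] with u hu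
      exact heq u hu
    have hdd : deriv (deriv f) T = d := hevq.deriv_eq
    -- From the ODE, d > 0
    have hTpos : (0:ℝ) < T := by linarith
    have hdpos : 0 < d := by
      have h := hode T hTs
      rw [hdfT, hdd] at h
      have hB : 0 < b / T ^ 2 * f T * (1 + f T) := by positivity
      have e1 : a / T * (0:ℝ) = 0 := by ring
      have e2 : c * (0:ℝ) ^ 2 / (1 + f T) = 0 := by ring
      linarith
    -- But d ≤ 0 since g > 0 on [1,T) and g T = 0
    have hdle : d ≤ 0 := by
      have hda : HasDerivAt g d T := hgd.hasDerivAt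
      rw [hasDerivAt_iff_tendsto_slope] at hda
      have hnb : (𝓝[Set.Ioo (1:ℝ) T] T).NeBot := by
        rw [← mem_closure_iff_nhdsWithin_neBot, closure_Ioo (ne_of_lt hT1)]
        exact ⟨hT1.le, le_rfl⟩
      have hda' : Tendsto (slope g T) (𝓝[Set.Ioo (1:ℝ) T] T) (𝓝 d) :=
        hda.mono_left (nhdsWithin_mono _ (fun x hx => ne_of_lt hx.2))
      refine le_of_tendsto hda' ?_
      filter_upwards [self_mem_nhdsWithin] with u hu
      have hgu : 0 < g u := hleft u ⟨hu.1.le, hu.2⟩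
      rw [slope_def_field, hgT0, sub_zero]
      exact div_nonpos_of_nonneg_of_nonpos hgu.le (by linarith [hu.2])
    linarith
  -- Conclude positivity of f
  intro t ht
  rcases eq_or_lt_of_le ht.1 with h1 | h1
  · rw [← h1, hf1]; exact hβ
  · have hsub : Set.Icc (1:ℝ) t ⊆ s := fun x hx => ⟨hx.1, lt_of_le_of_lt hx.2 ht.2⟩
    have hmono : StrictMonoOn f (Set.Icc (1:ℝ) t) := by
      apply strictMonoOn_of_deriv_pos (convex_Icc 1 t) (hf.continuousOn.mono hsub)
      intro x hx
      rw [interior_Icc] at hx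
      have hxs : x ∈ s := hsub ⟨hx.1.le, hx.2.le⟩
      rw [heq x hxs]
      exact hgpos x hxs
    have := hmono ⟨le_rfl, h1.le⟩ ⟨h1.le, le_rfl⟩ h1
    rw [hf1] at this
    linarith
end

section
/- Let θ ≥ 1 and suppose Aθ < 2b/(3−2c) where 1<c<3/2, b>0, a>1. Let f be a maximal C² solution on [1,t_m) of f'' + (a/t)f' − (b/t²)f(1+f) − c(f')²/(1+f) = 0 with positive initial data, let g be as defined above, and set η_θ(t) := 1/(g(t)^θ (1+f(t))). Then lim_{t→t_m} η_θ(t) = 0, and η_θ is bounded on [1,t_m): there is a constant C⋆ > 0 with 0 < η_θ(t) ≤ C⋆ for all t ∈ [1,t_m). (Here one uses that χ is bounded: 0 < χ ≤ C_χ, and that lim_{t→t_m} f(t) = +∞.) -/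
open Set Filter MeasureTheory intervalIntegral Real

set_option maxHeartbeats 1000000 in
/-- Vanishing limit and boundedness of `η_θ(t) = 1/(g(t)^θ (1+f(t)))` at the maximal
time `t_m` (characterized by `f → +∞`), given the boundedness of `χ`. -/
theorem eta_theta_limit (a b c A θ β β₀ tm B : ℝ) (f g χ η : ℝ → ℝ)
    (ha : 1 < a) (hb : 0 < b) (hc1 : 1 < c) (hc2 : c < 3/2) (hA : 0 < A)
    (hθ : 1 ≤ θ) (hAθ : A * θ < 2 * b / (3 - 2 * c))
    (hβ : 0 < β) (hβ₀ : 0 < β₀) (htm : 1 < tm)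
    (hf : ContDiffOn ℝ 2 f (Set.Ico 1 tm))
    (hode : ∀ t ∈ Set.Ico (1:ℝ) tm,
      deriv (deriv f) t + (a / t) * deriv f t - (b / t ^ 2) * f t * (1 + f t)
        - c * (deriv f t) ^ 2 / (1 + f t) = 0)
    (hf1 : f 1 = β) (hf1' : deriv f 1 = β₀)
    (hB : B = (1 + β) ^ c / β₀)
    (hg : ∀ t, g t =
      Real.exp (-A * ∫ s in (1:ℝ)..t, f s * (f s + 1) / (s ^ 2 * deriv f s)))
    (hχ : ∀ t, χ t =
      t ^ (2 - a) * deriv f t / ((1 + f t) ^ (2 - c) * f t * g t ^ (b / A)))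
    (hχbd : ∃ Cχ > 0, ∀ t ∈ Set.Ico (1:ℝ) tm, 0 < χ t ∧ χ t ≤ Cχ)
    (hflim : Filter.Tendsto f (nhdsWithin tm (Set.Iio tm)) Filter.atTop)
    (hη : ∀ t, η t = 1 / (g t ^ θ * (1 + f t))) :
    Filter.Tendsto η (nhdsWithin tm (Set.Iio tm)) (nhds 0) ∧
    ∃ C > 0, ∀ t ∈ Set.Ico (1:ℝ) tm, 0 < η t ∧ η t ≤ C := by
  obtain ⟨Cχ, hCχ, hχb⟩ := hχbd
  have hA0 : A ≠ 0 := ne_of_gt hA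
  have hθ0 : (0:ℝ) < θ := lt_of_lt_of_le one_pos hθ
  have hAθpos : 0 < A * θ := mul_pos hA hθ0
  have h3c : 0 < 3 - 2 * c := by linarith
  set lam : ℝ := 2 * b / (A * θ) with hlam_def
  have hlam_pos : 0 < lam := div_pos (by linarith) hAθpos
  have hlam : 3 - 2 * c < lam := by
    rw [hlam_def, lt_div_iff₀ hAθpos]
    calc (3 - 2*c) * (A*θ) = (A*θ) * (3 - 2*c) := by ring
    _ < (2*b/(3-2*c)) * (3-2*c) := by
        exact mul_lt_mul_of_pos_right hAθ h3c
    _ = 2 * b := by field_simp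
  set eps : ℝ := lam - (3 - 2 * c) with heps_def
  have heps : 0 < eps := by simp only [heps_def]; linarith
  clear_value lam eps
  -- differentiability at 1
  have hfd1 : DifferentiableAt ℝ f 1 := by
    by_contra h
    rw [deriv_zero_of_not_differentiableAt h] at hf1'
    exact absurd hf1'.symm (ne_of_gt hβ₀)
  -- derivWithin = deriv on Ico
  have hUD : UniqueDiffOn ℝ (Set.Ico (1:ℝ) tm) := uniqueDiffOn_Ico 1 tm
  have hDW : ∀ t ∈ Set.Ico (1:ℝ) tm, derivWithin f (Set.Ico 1 tm) t = deriv f t := by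
    intro t ht
    rcases eq_or_lt_of_le ht.1 with h1 | h1
    · subst h1
      exact hfd1.derivWithin (hUD _ ht)
    · exact derivWithin_of_mem_nhds (Ico_mem_nhds h1 ht.2)
  have hF : ContinuousOn (deriv f) (Set.Ico 1 tm) :=
    (hf.continuousOn_derivWithin hUD one_le_two).congr fun t ht => (hDW t ht).symm
  have hfc : ContinuousOn f (Set.Ico 1 tm) := hf.continuousOn
  -- positivity of g
  have hgpos : ∀ t, 0 < g t := fun t => by rw [hg t]; exact Real.exp_pos _
  -- nonvanishing of f and deriv f from χ > 0
  have hfne : ∀ t ∈ Set.Ico (1:ℝ) tm, f t ≠ 0 := by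
    intro t ht h0
    have := (hχb t ht).1
    rw [hχ t, h0, mul_zero, zero_mul, div_zero] at this
    exact lt_irrefl 0 this
  have hf'ne : ∀ t ∈ Set.Ico (1:ℝ) tm, deriv f t ≠ 0 := by
    intro t ht h0
    have := (hχb t ht).1
    rw [hχ t, h0, mul_zero, zero_div] at this
    exact lt_irrefl 0 this
  -- positivity of f and deriv f
  have hfpos : ∀ t ∈ Set.Ico (1:ℝ) tm, 0 < f t := by
    intro t ht
    rcases lt_or_gt_of_ne (hfne t ht) with h | h
    · exfalso
      have hsub : Set.Icc (1:ℝ) t ⊆ Set.Ico 1 tm := Set.Icc_subset_Ico_iff ht.1 |>.2 ⟨le_refl _, ht.2⟩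
      have := intermediate_value_Icc' ht.1 (hfc.mono hsub)
      have h0 : (0:ℝ) ∈ Set.Icc (f t) (f 1) := ⟨le_of_lt h, by rw [hf1]; exact le_of_lt hβ⟩
      obtain ⟨s, hs, hfs⟩ := this h0
      exact hfne s (hsub hs) hfs
    · exact h
  have hf'pos : ∀ t ∈ Set.Ico (1:ℝ) tm, 0 < deriv f t := by
    intro t ht
    rcases lt_or_gt_of_ne (hf'ne t ht) with h | h
    · exfalso
      have hsub : Set.Icc (1:ℝ) t ⊆ Set.Ico 1 tm := Set.Icc_subset_Ico_iff ht.1 |>.2 ⟨le_refl _, ht.2⟩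
      have := intermediate_value_Icc' ht.1 (hF.mono hsub)
      have h0 : (0:ℝ) ∈ Set.Icc (deriv f t) (deriv f 1) :=
        ⟨le_of_lt h, by rw [hf1']; exact le_of_lt hβ₀⟩
      obtain ⟨s, hs, hfs⟩ := this h0
      exact hf'ne s (hsub hs) hfs
    · exact h
  have h1fpos : ∀ t ∈ Set.Ico (1:ℝ) tm, 0 < 1 + f t := fun t ht => by
    have := hfpos t ht; linarith
  -- the integrand and primitive
  set φ : ℝ → ℝ := fun s => f s * (f s + 1) / (s ^ 2 * deriv f s) with hφ_def
  set G : ℝ → ℝ := fun t => ∫ s in (1:ℝ)..t, φ s with hG_def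
  have hgG : ∀ t, g t = Real.exp (-A * G t) := hg
  have htpos : ∀ t ∈ Set.Ico (1:ℝ) tm, (0:ℝ) < t := fun t ht => lt_of_lt_of_le one_pos ht.1
  have hφc : ContinuousOn φ (Set.Ico 1 tm) := by
    apply ContinuousOn.div
    · exact hfc.mul (hfc.add continuousOn_const)
    · exact ((continuousOn_id.pow 2)).mul hF
    · intro t ht
      have := htpos t ht
      have := hf'pos t ht
      positivity
  have hGd : ∀ t ∈ Set.Ioo (1:ℝ) tm, HasDerivAt G (φ t) t := by
    intro t ht
    have hIoo : Set.Ioo (1:ℝ) tm ⊆ Set.Ico 1 tm := Set.Ioo_subset_Ico_self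
    have hsub : Set.uIcc (1:ℝ) t ⊆ Set.Ico 1 tm := by
      rw [Set.uIcc_of_le (le_of_lt ht.1)]
      exact Set.Icc_subset_Ico_iff (le_of_lt ht.1) |>.2 ⟨le_refl _, ht.2⟩
    have hint : IntervalIntegrable φ MeasureTheory.volume 1 t :=
      (hφc.mono hsub).intervalIntegrable
    have hca : ContinuousAt φ t :=
      (hφc t (hIoo ht)).continuousAt (Ico_mem_nhds ht.1 ht.2)
    exact intervalIntegral.integral_hasDerivAt_right hint
      ((hφc.mono hIoo).stronglyMeasurableAtFilter isOpen_Ioo t ht) hca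
  have hGc : ContinuousOn G (Set.Ico 1 tm) := by
    intro t ht
    set r : ℝ := (t + tm) / 2 with hr_def
    have htr : t < r := by simp only [hr_def]; linarith [ht.2]
    have hrtm : r < tm := by simp only [hr_def]; linarith [ht.2]
    have h1r : (1:ℝ) ≤ r := le_trans ht.1 (le_of_lt htr)
    have hsub : Set.Icc (1:ℝ) r ⊆ Set.Ico 1 tm :=
      Set.Icc_subset_Ico_iff h1r |>.2 ⟨le_refl _, hrtm⟩
    have hint : MeasureTheory.IntegrableOn φ (Set.uIcc 1 r) MeasureTheory.volume := by
      rw [Set.uIcc_of_le h1r]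
      exact (hφc.mono hsub).integrableOn_compact isCompact_Icc
    have hcont : ContinuousOn G (Set.Icc 1 r) := by
      have := intervalIntegral.continuousOn_primitive_interval (a := (1:ℝ)) (b := r)
        (f := φ) (μ := MeasureTheory.volume) hint
      rwa [Set.uIcc_of_le h1r] at this
    have h1 : ContinuousWithinAt G (Set.Icc 1 r) t := hcont t ⟨ht.1, le_of_lt htr⟩
    apply h1.mono_of_mem_nhdsWithin
    have h2 : Set.Ico (1:ℝ) tm ∩ Set.Iic r ∈ nhdsWithin t (Set.Ico 1 tm) :=
      Filter.inter_mem self_mem_nhdsWithin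
        (mem_nhdsWithin_of_mem_nhds (Iic_mem_nhds htr))
    exact Filter.mem_of_superset h2 (fun x hx => ⟨hx.1.1, hx.2⟩)
  -- M and the representation of η
  set M : ℝ → ℝ := fun t => -(A * θ) * G t + Real.log (1 + f t) with hM_def
  have hgθf : ∀ t ∈ Set.Ico (1:ℝ) tm, g t ^ θ * (1 + f t) = Real.exp (M t) := by
    intro t ht
    have h1f := h1fpos t ht
    rw [hgG t, Real.rpow_def_of_pos (Real.exp_pos _), Real.log_exp, hM_def]
    rw [Real.exp_add, Real.exp_log h1f]
    ring_nf
  have hηe : ∀ t ∈ Set.Ico (1:ℝ) tm, η t = Real.exp (-(M t)) := by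
    intro t ht
    rw [hη t, hgθf t ht, Real.exp_neg]
    exact one_div _
  have hηpos : ∀ t ∈ Set.Ico (1:ℝ) tm, 0 < η t := fun t ht => by
    rw [hηe t ht]; exact Real.exp_pos _
  -- L and the representation of χ
  set L : ℝ → ℝ := fun t => (2 - a) * Real.log t + Real.log (deriv f t)
      + (c - 2) * Real.log (1 + f t) - Real.log (f t) + b * G t with hL_def
  have hLχ : ∀ t ∈ Set.Ico (1:ℝ) tm, χ t = Real.exp (L t) := by
    intro t ht
    have ht0 := htpos t ht
    have h1f := h1fpos t ht
    have hu := hfpos t ht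
    have hv := hf'pos t ht
    rw [hχ t, hgG t, Real.rpow_def_of_pos ht0, Real.rpow_def_of_pos h1f,
      Real.rpow_def_of_pos (Real.exp_pos _), Real.log_exp]
    rw [hL_def]
    have hv' : deriv f t = Real.exp (Real.log (deriv f t)) := (Real.exp_log hv).symm
    have hu' : f t = Real.exp (Real.log (f t)) := (Real.exp_log hu).symm
    beta_reduce
    calc Real.exp (Real.log t * (2 - a)) * deriv f t /
          (Real.exp (Real.log (1 + f t) * (2 - c)) * f t * Real.exp (-A * G t * (b / A)))
        = Real.exp (Real.log t * (2 - a)) * Real.exp (Real.log (deriv f t)) /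
          (Real.exp (Real.log (1 + f t) * (2 - c)) * Real.exp (Real.log (f t))
            * Real.exp (-A * G t * (b / A))) := by rw [← hv', ← hu']
      _ = Real.exp (Real.log t * (2 - a) + Real.log (deriv f t)
            - (Real.log (1 + f t) * (2 - c) + Real.log (f t) + -A * G t * (b / A))) := by
          rw [← Real.exp_add, ← Real.exp_add, ← Real.exp_add, ← Real.exp_sub]
      _ = Real.exp ((2 - a) * Real.log t + Real.log (deriv f t)
            + (c - 2) * Real.log (1 + f t) - Real.log (f t) + b * G t) := by
          congr 1
          field_simp
          ring
  have hLle : ∀ t ∈ Set.Ico (1:ℝ) tm, L t ≤ Real.log Cχ := by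
    intro t ht
    have h := (hχb t ht).2
    rw [hLχ t ht] at h
    exact (Real.le_log_iff_exp_le hCχ).2 h
  -- choose T₀ below tm with f ≥ 2/eps on [T₀, tm)
  have hev : ∀ᶠ t in nhdsWithin tm (Set.Iio tm), 2/eps ≤ f t := hflim.eventually_ge_atTop _
  rw [Filter.eventually_iff, mem_nhdsLT_iff_exists_Ioo_subset' htm] at hev
  obtain ⟨l, hl, hlsub⟩ := hev
  set T₀ : ℝ := (max l 1 + tm) / 2 with hT0_def
  have hl' : l < tm := hl
  have hmltm : max l 1 < tm := max_lt hl' htm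
  have hT0l : l < T₀ := by
    have h := le_max_left l 1
    simp only [hT0_def]; linarith
  have hT0tm : T₀ < tm := by simp only [hT0_def]; linarith
  have h1T0 : 1 ≤ T₀ := by
    have h := le_max_right l 1
    simp only [hT0_def]; linarith
  have hT0mem : T₀ ∈ Set.Ico (1:ℝ) tm := ⟨h1T0, hT0tm⟩
  have hfT0 : ∀ t ∈ Set.Ico T₀ tm, 2/eps ≤ f t := fun t ht =>
    hlsub ⟨lt_of_lt_of_le hT0l ht.1, ht.2⟩
  -- continuity facts
  have logt : ContinuousOn (fun x : ℝ => Real.log x) (Set.Ico 1 tm) :=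
    continuousOn_id.log fun t ht => ne_of_gt (htpos t ht)
  have logF : ContinuousOn (fun x => Real.log (deriv f x)) (Set.Ico 1 tm) :=
    hF.log fun t ht => ne_of_gt (hf'pos t ht)
  have log1f : ContinuousOn (fun x => Real.log (1 + f x)) (Set.Ico 1 tm) :=
    (continuousOn_const.add hfc).log fun t ht => ne_of_gt (h1fpos t ht)
  have logf : ContinuousOn (fun x => Real.log (f x)) (Set.Ico 1 tm) :=
    hfc.log fun t ht => ne_of_gt (hfpos t ht)
  have hLc : ContinuousOn L (Set.Ico 1 tm) := by
    rw [hL_def]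
    exact ((((continuousOn_const.mul logt).add logF).add
      (continuousOn_const.mul log1f)).sub logf).add (continuousOn_const.mul hGc)
  have hMc : ContinuousOn M (Set.Ico 1 tm) := by
    rw [hM_def]
    exact (continuousOn_const.mul hGc).add log1f
  -- the monotone auxiliary function H
  set H : ℝ → ℝ := fun t => L t + lam * M t - (eps/2) * Real.log (1 + f t)
      + (2*a - 2) * Real.log t with hH_def
  have hHd : ∀ t ∈ Set.Ioo (1:ℝ) tm, HasDerivAt H
      ((1 + eps/2) * deriv f t / (1 + f t) - deriv f t / f t) t := by
    intro t ht
    have htI : t ∈ Set.Ico (1:ℝ) tm := Set.Ioo_subset_Ico_self ht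
    have ht0 : (0:ℝ) < t := htpos t htI
    have hu := hfpos t htI
    have hv := hf'pos t htI
    have h1f := h1fpos t htI
    have hfd : HasDerivAt f (deriv f t) t := by
      have h1 : DifferentiableOn ℝ f (Set.Ico 1 tm) := hf.differentiableOn two_ne_zero
      exact ((h1 t htI).differentiableAt (Ico_mem_nhds ht.1 ht.2)).hasDerivAt
    have hf'd : HasDerivAt (deriv f) (deriv (deriv f) t) t := by
      have h2 : ContDiffOn ℝ 1 (deriv f) (Set.Ioo 1 tm) :=
        (hf.mono Set.Ioo_subset_Ico_self).deriv_of_isOpen isOpen_Ioo (by norm_num)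
      exact ((h2.differentiableOn one_ne_zero t ht).differentiableAt
        (isOpen_Ioo.mem_nhds ht)).hasDerivAt
    have hGd' := hGd t ht
    have hlog_t : HasDerivAt (fun x : ℝ => Real.log x) t⁻¹ t :=
      Real.hasDerivAt_log (ne_of_gt ht0)
    have clogF : HasDerivAt (fun x => Real.log (deriv f x))
        (deriv (deriv f) t / deriv f t) t := hf'd.log (ne_of_gt hv)
    have clog1f : HasDerivAt (fun x => Real.log (1 + f x))
        (deriv f t / (1 + f t)) t := by
      have := ((hasDerivAt_const t (1:ℝ)).add hfd).log (by positivity : (1:ℝ) + f t ≠ 0)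
      simpa using this
    have clogf : HasDerivAt (fun x => Real.log (f x)) (deriv f t / f t) t :=
      hfd.log (ne_of_gt hu)
    have hLd : HasDerivAt L ((2 - a) * t⁻¹ + deriv (deriv f) t / deriv f t
        + (c - 2) * (deriv f t / (1 + f t)) - deriv f t / f t + b * φ t) t := by
      rw [hL_def]
      exact ((((hlog_t.const_mul (2 - a)).add clogF).add
        (clog1f.const_mul (c - 2))).sub clogf).add (hGd'.const_mul b)
    have hMd : HasDerivAt M (-(A * θ) * φ t + deriv f t / (1 + f t)) t := by
      rw [hM_def]
      exact (hGd'.const_mul (-(A * θ))).add clog1f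
    have hHd_raw : HasDerivAt H (((2 - a) * t⁻¹ + deriv (deriv f) t / deriv f t
        + (c - 2) * (deriv f t / (1 + f t)) - deriv f t / f t + b * φ t)
        + lam * (-(A * θ) * φ t + deriv f t / (1 + f t))
        - (eps/2) * (deriv f t / (1 + f t)) + (2*a - 2) * t⁻¹) t := by
      rw [hH_def]
      exact ((hLd.add (hMd.const_mul lam)).sub
        (clog1f.const_mul (eps/2))).add (hlog_t.const_mul (2*a - 2))
    have hode' := hode t htI
    have hw : deriv (deriv f) t = -(a/t) * deriv f t + (b/t^2) * f t * (1 + f t)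
        + c * (deriv f t)^2 / (1 + f t) := by linarith
    convert hHd_raw using 1
    rw [hw]
    simp only [hφ_def, heps_def, hlam_def]
    field_simp
    ring
  have hEnonneg : ∀ x ∈ Set.Ioo T₀ tm,
      0 ≤ (1 + eps/2) * deriv f x / (1 + f x) - deriv f x / f x := by
    intro x hx
    have hxI : x ∈ Set.Ico (1:ℝ) tm := ⟨le_trans h1T0 (le_of_lt hx.1), hx.2⟩
    have hu := hfpos x hxI
    have hv := hf'pos x hxI
    have h1f := h1fpos x hxI
    have hfx : 2/eps ≤ f x := hfT0 x ⟨le_of_lt hx.1, hx.2⟩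
    have h2 : 2 ≤ eps * f x := by rw [div_le_iff₀ heps] at hfx; linarith
    rw [sub_nonneg, div_le_div_iff₀ hu h1f]
    nlinarith [mul_nonneg (by linarith : (0:ℝ) ≤ eps * f x - 2) hv.le]
  have hsubT : Set.Ico T₀ tm ⊆ Set.Ico (1:ℝ) tm := Set.Ico_subset_Ico_left h1T0
  have hHc : ContinuousOn H (Set.Ico T₀ tm) := by
    rw [hH_def]
    exact (((hLc.mono hsubT).add (continuousOn_const.mul (hMc.mono hsubT))).sub
      (continuousOn_const.mul (log1f.mono hsubT))).add
      (continuousOn_const.mul (logt.mono hsubT))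
  have hHmono : MonotoneOn H (Set.Ico T₀ tm) := by
    apply monotoneOn_of_deriv_nonneg (convex_Ico _ _) hHc
    · rw [interior_Ico]
      intro x hx
      have hx' : x ∈ Set.Ioo (1:ℝ) tm := ⟨lt_of_le_of_lt h1T0 hx.1, hx.2⟩
      exact ((hHd x hx').differentiableAt).differentiableWithinAt
    · rw [interior_Ico]
      intro x hx
      have hx' : x ∈ Set.Ioo (1:ℝ) tm := ⟨lt_of_le_of_lt h1T0 hx.1, hx.2⟩
      rw [(hHd x hx').deriv]
      exact hEnonneg x hx
  -- key lower bound for lam * M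
  set K : ℝ := H T₀ - Real.log Cχ - (2*a - 2) * Real.log tm with hK_def
  clear_value K
  clear_value H M L G φ T₀
  have hMlb : ∀ t ∈ Set.Ico T₀ tm, K + (eps/2) * Real.log (1 + f t) ≤ lam * M t := by
    intro t ht
    have htI : t ∈ Set.Ico (1:ℝ) tm := hsubT ht
    have h1 : H T₀ ≤ H t := hHmono ⟨le_refl _, hT0tm⟩ ht ht.1
    have h1' : H T₀ ≤ L t + lam * M t - (eps/2) * Real.log (1 + f t)
        + (2*a - 2) * Real.log t := by
      calc H T₀ ≤ H t := h1
      _ = _ := by rw [hH_def]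
    have h2 := hLle t htI
    have h3 : Real.log t ≤ Real.log tm :=
      Real.log_le_log (htpos t htI) (le_of_lt ht.2)
    have h4 : (0:ℝ) ≤ 2*a - 2 := by linarith
    have h5 := mul_le_mul_of_nonneg_left h3 h4
    linarith [hK_def.le, hK_def.ge]

  -- the limit
  have hIoomem : Set.Ioo T₀ tm ∈ nhdsWithin tm (Set.Iio tm) := by
    rw [mem_nhdsWithin]
    exact ⟨Set.Ioi T₀, isOpen_Ioi, hT0tm, fun x hx => ⟨hx.1, hx.2⟩⟩
  have hMtop : Filter.Tendsto M (nhdsWithin tm (Set.Iio tm)) Filter.atTop := by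
    have h1 : Filter.Tendsto (fun t => Real.log (1 + f t))
        (nhdsWithin tm (Set.Iio tm)) Filter.atTop :=
      Real.tendsto_log_atTop.comp (Filter.tendsto_atTop_add_const_left _ 1 hflim)
    have h2 : Filter.Tendsto (fun t => K + (eps/2) * Real.log (1 + f t))
        (nhdsWithin tm (Set.Iio tm)) Filter.atTop :=
      Filter.tendsto_atTop_add_const_left _ K (h1.const_mul_atTop (by positivity))
    have hev2 : ∀ᶠ t in nhdsWithin tm (Set.Iio tm),
        K + (eps/2) * Real.log (1 + f t) ≤ lam * M t :=
      Filter.eventually_of_mem hIoomem fun t ht => hMlb t ⟨le_of_lt ht.1, ht.2⟩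
    have h3 : Filter.Tendsto (fun t => lam * M t)
        (nhdsWithin tm (Set.Iio tm)) Filter.atTop := tendsto_atTop_mono' _ hev2 h2
    have h4 := h3.atTop_div_const hlam_pos
    refine h4.congr fun t => ?_
    exact mul_div_cancel_left₀ _ (ne_of_gt hlam_pos)
  have hlimit : Filter.Tendsto η (nhdsWithin tm (Set.Iio tm)) (nhds 0) := by
    have h1 : Filter.Tendsto (fun t => Real.exp (-(M t)))
        (nhdsWithin tm (Set.Iio tm)) (nhds 0) :=
      Real.tendsto_exp_atBot.comp (Filter.tendsto_neg_atTop_atBot.comp hMtop)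
    apply h1.congr'
    refine Filter.eventually_of_mem hIoomem fun t ht => ?_
    exact (hηe t (hsubT ⟨le_of_lt ht.1, ht.2⟩)).symm
  -- the bound
  have hMge : ∀ t ∈ Set.Ico T₀ tm, K / lam ≤ M t := by
    intro t ht
    have htI : t ∈ Set.Ico (1:ℝ) tm := hsubT ht
    have h1 := hMlb t ht
    have h2 : 0 ≤ Real.log (1 + f t) := Real.log_nonneg (by linarith [hfpos t htI])
    rw [div_le_iff₀ hlam_pos]
    have h3 : 0 ≤ eps * Real.log (1 + f t) := mul_nonneg (le_of_lt heps) h2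
    nlinarith [h1, h3]
  have hbd1 : ∀ t ∈ Set.Ico T₀ tm, η t ≤ Real.exp (-(K/lam)) := by
    intro t ht
    have htI : t ∈ Set.Ico (1:ℝ) tm := hsubT ht
    rw [hηe t htI]
    exact Real.exp_le_exp.2 (by linarith [hMge t ht])
  have hsub2 : Set.Icc (1:ℝ) T₀ ⊆ Set.Ico 1 tm :=
    Set.Icc_subset_Ico_iff h1T0 |>.2 ⟨le_refl _, hT0tm⟩
  have hηc : ContinuousOn η (Set.Icc 1 T₀) := by
    have h1 : ContinuousOn (fun t => Real.exp (-(M t))) (Set.Icc 1 T₀) :=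
      Real.continuous_exp.comp_continuousOn (hMc.mono hsub2).neg
    exact h1.congr fun t ht => hηe t (hsub2 ht)
  obtain ⟨x0, hx0, hx0max⟩ :=
    isCompact_Icc.exists_isMaxOn (Set.nonempty_Icc.2 h1T0) hηc
  refine ⟨hlimit, max (η x0) (Real.exp (-(K/lam))),
    lt_max_of_lt_left (hηpos x0 (hsub2 hx0)), ?_⟩
  intro t ht
  refine ⟨hηpos t ht, ?_⟩
  rcases le_total t T₀ with h | h
  · exact le_max_of_le_left (hx0max ⟨ht.1, h⟩)
  · exact le_max_of_le_right (hbd1 t ⟨h, ht.2⟩)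
end

section
/- Let γ₁ > 0 and suppose real numbers 𝔷₀,…,𝔷₇ satisfy Σ_{ℓ=0}^{7}|𝔷_ℓ| < γ₁. Fix λ > 0 and ι³ ∈ (0,1/5], and for η = (η₁,…,η₅) ∈ ℝ⁵ define the quadratic form Q(η) := (4λ+𝔷₁)η₁² + (25/36+𝔷₀)η₂² + (4λ + 2(3−8ι³)/15)η₃² + (4λ+4+𝔷₆)η₄² + ((3ι³+2)²/(2(10λ+ι³+9)))η₅² + 𝔷₂η₁η₂ + (−8λ+𝔷₃)η₁η₃ + 𝔷₄η₁η₄ + (2/3)(1−ι³)η₂η₄ + (−2(1−ι³)/5+𝔷₅)η₃η₄ − ((3ι³+2)²/(6(10λ+ι³+9)))η₅η₃ + (2ι³+4/3+𝔷₇)η₅η₄. If γ₁ ≤ (1/2)min{ 8λ/(5(3+800λ)), 1/1500, 1/(27(13λ+12)(10λ+ι³+9)²) }, then Q(η) > γ₁|η|² for all η ≠ 0; moreover Q(η) < γ₂|η|² with γ₂ := max{8λ+1+γ₁, 4λ+6+γ₁}. -/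
lemma lemA (l a c : ℝ) (hl : 0 < l) :
    8 * l / (5 * (3 + 800 * l)) * a ^ 2 ≤
      4 * l * a ^ 2 - 8 * l * a * c + (4 * l + 1/500) * c ^ 2 := by
  rw [div_mul_eq_mul_div, div_le_iff₀ (by nlinarith : (0:ℝ) < 5 * (3 + 800 * l))]
  nlinarith [sq_nonneg ((52*l + 16000*l^2) * a - (60*l + 16000*l^2) * c), sq_nonneg (a - c),
    mul_pos hl hl, sq_nonneg c, mul_nonneg (mul_nonneg hl.le hl.le) (sq_nonneg c),
    mul_nonneg hl.le (sq_nonneg (a-c)), mul_nonneg (mul_nonneg hl.le hl.le) (sq_nonneg (a-c))]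

lemma lemBCD (l i b c d : ℝ) (hl : 0 < l) (hi0 : 0 < i) (hi5 : i ≤ 1/5) :
    (1/1500) * (b^2 + c^2 + d^2) ≤
      (25/36) * b^2
      + (2*(3-8*i)/15 - 1/500 - (3*i+2)^2/630 - (3*i+2)/85) * c^2
      + (4*l + 4 - 9*(10*l+i+9)/40 - 5*(3*i+2)/17) * d^2
      + (2/3)*(1-i)*b*d - (2*(1-i)/5)*c*d := by
  have h1i : (0:ℝ) ≤ 1 - i := by linarith
  have h5i : (0:ℝ) ≤ 1/5 - i := by linarith
  nlinarith [mul_nonneg h1i (sq_nonneg (2*b + d)), mul_nonneg h1i (sq_nonneg (9*c - 20*d)),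
    mul_nonneg hl.le (sq_nonneg d), sq_nonneg b, sq_nonneg c, sq_nonneg d,
    mul_nonneg hi0.le (sq_nonneg c), mul_nonneg h5i (sq_nonneg c),
    mul_nonneg (mul_nonneg hi0.le h5i) (sq_nonneg c), mul_nonneg hi0.le (sq_nonneg d),
    mul_nonneg hi0.le (sq_nonneg b)]
lemma claim1 (P L s e W : ℝ) (hP : 12 ≤ P) (hL : 9 ≤ L) (hs : 2 ≤ s) :
    0 ≤ 5355*P*L*(6*s*e + W)^2 + 100*W^2 - 14280*e^2 := by
  have hPL : (108:ℝ) ≤ P*L := by nlinarith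
  have hPL0 : (0:ℝ) ≤ P*L := by linarith
  have hγ : (0:ℝ) < 5355*P*L + 100 := by nlinarith
  have hdisc : 0 ≤ (5355*P*L+100)*(192780*(P*L)*s^2 - 14280) - (32130*(P*L)*s)^2 := by
    nlinarith [mul_nonneg hPL0 (by nlinarith : (0:ℝ) ≤ s^2 - 4)]
  nlinarith [sq_nonneg ((5355*P*L+100)*W + 32130*P*L*s*e), mul_nonneg hdisc (sq_nonneg e), hγ]

lemma claim2 (P L s c d : ℝ) (hP : 12 ≤ P) (hL : 9 ≤ L) (hs : 2 ≤ s) :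
    0 ≤ 27*P*L*((17/3)*s^2*c^2 + 168*s*L*c^2 + (4760/3)*s*L*c*d + (119/3)*L^2*d^2 + 4200*s*L*d^2)
      - 100*(-(s*c) + 4*L*d)^2 := by
  have hPL : (108:ℝ) ≤ P*L := by nlinarith
  have h108 : (0:ℝ) ≤ P*L - 108 := by linarith
  have hPLLs : (0:ℝ) ≤ P*L*L*s := by
    nlinarith [mul_nonneg (mul_nonneg (by linarith : (0:ℝ) ≤ P*L) (by linarith : (0:ℝ) ≤ L)) (by linarith : (0:ℝ) ≤ s)]
  nlinarith [mul_nonneg hPLLs (sq_nonneg (18*c + 85*d)), sq_nonneg (s*c + L*d),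
    mul_nonneg h108 (sq_nonneg (s*c)), mul_nonneg h108 (sq_nonneg (L*d)),
    mul_nonneg hPLLs (sq_nonneg d), sq_nonneg (s*c), sq_nonneg (L*d)]

lemma lemE_poly (P L s c d e : ℝ) (hP : 12 ≤ P) (hL : 9 ≤ L) (hs : 2 ≤ s) :
    0 ≤ 27*P*L^2*(7140*s^2*e^2 - 2380*s^2*e*c + 9520*s*L*e*d
      + (204*s^2+168*s*L)*c^2 + (3213*L^2+4200*s*L)*d^2) - 14280*L*e^2 := by
  have hL0 : (0:ℝ) ≤ L := by linarith
  have e1 := mul_nonneg hL0 (claim1 P L s e (-(s*c) + 4*L*d) hP hL hs)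
  have e2 := mul_nonneg hL0 (claim2 P L s c d hP hL hs)
  have hid : 27*P*L^2*(7140*s^2*e^2 - 2380*s^2*e*c + 9520*s*L*e*d
      + (204*s^2+168*s*L)*c^2 + (3213*L^2+4200*s*L)*d^2) - 14280*L*e^2
      = L * (5355*P*L*(6*s*e + (-(s*c) + 4*L*d))^2 + 100*(-(s*c) + 4*L*d)^2 - 14280*e^2)
      + L * (27*P*L*((17/3)*s^2*c^2 + 168*s*L*c^2 + (4760/3)*s*L*c*d + (119/3)*L^2*d^2
          + 4200*s*L*d^2) - 100*(-(s*c) + 4*L*d)^2) := by ring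
  linarith [e1, e2, hid.ge, hid.le]

set_option maxHeartbeats 1000000 in
lemma lemE (l i c d e : ℝ) (hl : 0 < l) (hi0 : 0 < i) (hi5 : i ≤ 1/5) :
    (1/(27*(13*l+12)*(10*l+i+9)^2)) * e^2 ≤
      ((3*i+2)^2/(2*(10*l+i+9))) * e^2 - ((3*i+2)^2/(6*(10*l+i+9))) * e * c
      + (2*i+4/3) * e * d
      + ((3*i+2)^2/(70*(10*l+i+9)) + (3*i+2)/85) * c^2
      + (9*(10*l+i+9)/40 + 5*(3*i+2)/17) * d^2 := by
  have hN := lemE_poly (13*l+12) (10*l+i+9) (3*i+2) c d e (by linarith) (by linarith) (by linarith)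
  rw [← sub_nonneg]
  have key : ((3*i+2)^2/(2*(10*l+i+9))) * e^2 - ((3*i+2)^2/(6*(10*l+i+9))) * e * c
      + (2*i+4/3) * e * d
      + ((3*i+2)^2/(70*(10*l+i+9)) + (3*i+2)/85) * c^2
      + (9*(10*l+i+9)/40 + 5*(3*i+2)/17) * d^2
      - (1/(27*(13*l+12)*(10*l+i+9)^2)) * e^2
      = (27*(13*l+12)*(10*l+i+9)^2*(7140*(3*i+2)^2*e^2 - 2380*(3*i+2)^2*e*c
          + 9520*(3*i+2)*(10*l+i+9)*e*d
          + (204*(3*i+2)^2+168*(3*i+2)*(10*l+i+9))*c^2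
          + (3213*(10*l+i+9)^2+4200*(3*i+2)*(10*l+i+9))*d^2) - 14280*(10*l+i+9)*e^2)
        / (14280*27*(13*l+12)*(10*l+i+9)^3) := by
    have h1 : (10*l+i+9) ≠ 0 := by positivity
    have h2 : (13*l+12) ≠ 0 := by positivity
    field_simp
    ring
  rw [key]
  exact div_nonneg hN (by positivity)

lemma lemM (l i a b c d e : ℝ) (hl : 0 < l) (hi0 : 0 < i) (hi5 : i ≤ 1/5) :
    8 * l / (5 * (3 + 800 * l)) * a ^ 2 + (1/1500) * b ^ 2 + (1/1500) * c ^ 2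
      + (1/1500) * d ^ 2 + (1/(27*(13*l+12)*(10*l+i+9)^2)) * e ^ 2 ≤
    4*l*a^2 + (25/36)*b^2 + (4*l + 2*(3-8*i)/15)*c^2 + (4*l+4)*d^2
      + ((3*i+2)^2/(2*(10*l+i+9)))*e^2
      - 8*l*a*c + (2/3)*(1-i)*b*d - (2*(1-i)/5)*c*d
      - ((3*i+2)^2/(6*(10*l+i+9)))*e*c + (2*i+4/3)*e*d := by
  have hA := lemA l a c hl
  have hB := lemBCD l i b c d hl hi0 hi5
  have hE := lemE l i c d e hl hi0 hi5
  have hgap : (3*i+2)^2/(70*(10*l+i+9)) * c^2 ≤ (3*i+2)^2/630 * c^2 := by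
    apply mul_le_mul_of_nonneg_right _ (sq_nonneg c)
    apply div_le_div_of_nonneg_left (sq_nonneg _) (by norm_num) (by linarith)
  nlinarith [hA, hB, hE, hgap]
lemma lemUp (l i a b c d e : ℝ) (hl : 0 < l) (hi0 : 0 < i) (hi5 : i ≤ 1/5) :
    4*l*a^2 + (25/36)*b^2 + (4*l + 2*(3-8*i)/15)*c^2 + (4*l+4)*d^2
      + ((3*i+2)^2/(2*(10*l+i+9)))*e^2
      - 8*l*a*c + (2/3)*(1-i)*b*d - (2*(1-i)/5)*c*d
      - ((3*i+2)^2/(6*(10*l+i+9)))*e*c + (2*i+4/3)*e*d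
    ≤ max (8*l+1) (4*l+6) * (a^2+b^2+c^2+d^2+e^2) := by
  set M : ℝ := max (8*l+1) (4*l+6) with hM
  have hM1 : 8*l+1 ≤ M := le_max_left _ _
  have hM2 : 4*l+6 ≤ M := le_max_right _ _
  have hL : (9:ℝ) < 10*l+i+9 := by linarith
  have hb1 : ((3*i+2)^2/(2*(10*l+i+9)))*e^2 ≤ ((3*i+2)^2/18)*e^2 := by
    apply mul_le_mul_of_nonneg_right _ (sq_nonneg e)
    apply div_le_div_of_nonneg_left (sq_nonneg _) (by norm_num) (by linarith)
  have hX : (0:ℝ) ≤ (3*i+2)^2/(6*(10*l+i+9)) := by positivity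
  have hb2 : -(((3*i+2)^2/(6*(10*l+i+9)))*e*c) ≤ ((3*i+2)^2/(6*(10*l+i+9)))*((e^2+c^2)/2) := by
    nlinarith [mul_nonneg hX (sq_nonneg (e+c))]
  have hb3 : ((3*i+2)^2/(6*(10*l+i+9)))*((e^2+c^2)/2) ≤ ((3*i+2)^2/54)*((e^2+c^2)/2) := by
    apply mul_le_mul_of_nonneg_right _ (by positivity)
    apply div_le_div_of_nonneg_left (sq_nonneg _) (by norm_num) (by linarith)
  have h1i : (0:ℝ) ≤ 1 - i := by linarith
  nlinarith [mul_nonneg hl.le (sq_nonneg (a+c)), mul_nonneg h1i (sq_nonneg (b-d)),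
    mul_nonneg h1i (sq_nonneg (c+d)), sq_nonneg (e-d), sq_nonneg (e+d),
    mul_nonneg hi0.le (sq_nonneg (e-d)), sq_nonneg b, sq_nonneg c, sq_nonneg d, sq_nonneg e,
    sq_nonneg a, mul_nonneg hi0.le (sq_nonneg c), mul_nonneg hi0.le (sq_nonneg e),
    mul_nonneg (mul_nonneg hi0.le hi0.le) (sq_nonneg c),
    mul_nonneg hl.le (sq_nonneg b), mul_nonneg hl.le (sq_nonneg e), hb1,
    le_trans hb2 hb3]

lemma hcross (t x y S' : ℝ) (h : x^2 + y^2 ≤ 2*S') :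
    -(|t| * S') ≤ t*x*y ∧ t*x*y ≤ |t| * S' := by
  have h1 : 0 ≤ |t| - t := sub_nonneg.mpr (le_abs_self t)
  have h2 : 0 ≤ |t| + t := by linarith [neg_abs_le t]
  constructor
  · nlinarith [mul_nonneg h1 (sq_nonneg (x+y)), mul_nonneg h2 (sq_nonneg (x-y)),
      mul_nonneg (abs_nonneg t) (by linarith : 0 ≤ 2*S' - x^2 - y^2)]
  · nlinarith [mul_nonneg h1 (sq_nonneg (x-y)), mul_nonneg h2 (sq_nonneg (x+y)),
      mul_nonneg (abs_nonneg t) (by linarith : 0 ≤ 2*S' - x^2 - y^2)]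

lemma hdiag (t x S' : ℝ) (h : x^2 ≤ S') :
    -(|t| * S') ≤ t*x^2 ∧ t*x^2 ≤ |t| * S' := by
  have h1 : 0 ≤ |t| - t := sub_nonneg.mpr (le_abs_self t)
  have h2 : 0 ≤ |t| + t := by linarith [neg_abs_le t]
  constructor
  · nlinarith [mul_nonneg h2 (sq_nonneg x), mul_nonneg (abs_nonneg t) (by linarith : 0 ≤ S' - x^2)]
  · nlinarith [mul_nonneg h1 (sq_nonneg x), mul_nonneg (abs_nonneg t) (by linarith : 0 ≤ S' - x^2)]

set_option maxHeartbeats 4000000 in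
/-- Positivity and boundedness of the quadratic form associated with the matrix `𝔅`. -/
theorem quadratic_form_bounds (γ₁ l i3 : ℝ) (z : Fin 8 → ℝ)
    (hγ₁ : 0 < γ₁) (hz : ∑ i, |z i| < γ₁) (hl : 0 < l)
    (hi : i3 ∈ Set.Ioc (0:ℝ) (1/5))
    (hγ : γ₁ ≤ (1/2) * min (8 * l / (5 * (3 + 800 * l)))
      (min (1/1500) (1 / (27 * (13 * l + 12) * (10 * l + i3 + 9) ^ 2))))
    (η : Fin 5 → ℝ) (hη : η ≠ 0) :
    (4 * l + z 1) * (η 0) ^ 2 + (25/36 + z 0) * (η 1) ^ 2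
        + (4 * l + 2 * (3 - 8 * i3) / 15) * (η 2) ^ 2
        + (4 * l + 4 + z 6) * (η 3) ^ 2
        + ((3 * i3 + 2) ^ 2 / (2 * (10 * l + i3 + 9))) * (η 4) ^ 2
        + z 2 * η 0 * η 1 + (-8 * l + z 3) * η 0 * η 2 + z 4 * η 0 * η 3
        + (2/3) * (1 - i3) * η 1 * η 3
        + (-2 * (1 - i3) / 5 + z 5) * η 2 * η 3
        - ((3 * i3 + 2) ^ 2 / (6 * (10 * l + i3 + 9))) * η 4 * η 2
        + (2 * i3 + 4/3 + z 7) * η 4 * η 3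
      > γ₁ * ∑ i, (η i) ^ 2 ∧
    (4 * l + z 1) * (η 0) ^ 2 + (25/36 + z 0) * (η 1) ^ 2
        + (4 * l + 2 * (3 - 8 * i3) / 15) * (η 2) ^ 2
        + (4 * l + 4 + z 6) * (η 3) ^ 2
        + ((3 * i3 + 2) ^ 2 / (2 * (10 * l + i3 + 9))) * (η 4) ^ 2
        + z 2 * η 0 * η 1 + (-8 * l + z 3) * η 0 * η 2 + z 4 * η 0 * η 3
        + (2/3) * (1 - i3) * η 1 * η 3
        + (-2 * (1 - i3) / 5 + z 5) * η 2 * η 3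
        - ((3 * i3 + 2) ^ 2 / (6 * (10 * l + i3 + 9))) * η 4 * η 2
        + (2 * i3 + 4/3 + z 7) * η 4 * η 3
      < max (8 * l + 1 + γ₁) (4 * l + 6 + γ₁) * ∑ i, (η i) ^ 2 := by
  obtain ⟨hi0, hi5⟩ := hi
  rw [Fin.sum_univ_eight] at hz
  have hS0 : 0 < ((η 0)^2 + (η 1)^2 + (η 2)^2 + (η 3)^2 + (η 4)^2) := by
    obtain ⟨j, hj⟩ := Function.ne_iff.mp hη
    simp only [Pi.zero_apply] at hj
    have hj2 : 0 < (η j)^2 :=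
      lt_of_le_of_ne (sq_nonneg _) (Ne.symm (pow_ne_zero 2 hj))
    have h := Finset.sum_pos' (fun i (_ : i ∈ Finset.univ) => sq_nonneg (η i))
      ⟨j, Finset.mem_univ j, hj2⟩
    rwa [Fin.sum_univ_five] at h
  have hM := lemM l i3 (η 0) (η 1) (η 2) (η 3) (η 4) hl hi0 hi5
  have hU := lemUp l i3 (η 0) (η 1) (η 2) (η 3) (η 4) hl hi0 hi5
  have t1 : 2*γ₁ ≤ 8 * l / (5 * (3 + 800 * l)) := by
    have := min_le_left (8 * l / (5 * (3 + 800 * l)))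
      (min (1/1500) (1 / (27 * (13 * l + 12) * (10 * l + i3 + 9) ^ 2)))
    linarith
  have t2 : 2*γ₁ ≤ 1/1500 := by
    have h1 := min_le_right (8 * l / (5 * (3 + 800 * l)))
      (min (1/1500) (1 / (27 * (13 * l + 12) * (10 * l + i3 + 9) ^ 2)))
    have h2 := min_le_left ((1:ℝ)/1500) (1 / (27 * (13 * l + 12) * (10 * l + i3 + 9) ^ 2))
    linarith
  have t3 : 2*γ₁ ≤ 1 / (27 * (13 * l + 12) * (10 * l + i3 + 9) ^ 2) := by
    have h1 := min_le_right (8 * l / (5 * (3 + 800 * l)))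
      (min (1/1500) (1 / (27 * (13 * l + 12) * (10 * l + i3 + 9) ^ 2)))
    have h2 := min_le_right ((1:ℝ)/1500) (1 / (27 * (13 * l + 12) * (10 * l + i3 + 9) ^ 2))
    linarith
  have m0 := mul_le_mul_of_nonneg_right t1 (sq_nonneg (η 0))
  have m1 := mul_le_mul_of_nonneg_right t2 (sq_nonneg (η 1))
  have m2 := mul_le_mul_of_nonneg_right t2 (sq_nonneg (η 2))
  have m3 := mul_le_mul_of_nonneg_right t2 (sq_nonneg (η 3))
  have m4 := mul_le_mul_of_nonneg_right t3 (sq_nonneg (η 4))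
  have sq01 : (η 0)^2 + (η 1)^2 ≤ 2*((η 0)^2 + (η 1)^2 + (η 2)^2 + (η 3)^2 + (η 4)^2) := by linarith [sq_nonneg (η 2), sq_nonneg (η 3), sq_nonneg (η 4), sq_nonneg (η 0), sq_nonneg (η 1)]
  have sq02 : (η 0)^2 + (η 2)^2 ≤ 2*((η 0)^2 + (η 1)^2 + (η 2)^2 + (η 3)^2 + (η 4)^2) := by linarith [sq_nonneg (η 1), sq_nonneg (η 3), sq_nonneg (η 4), sq_nonneg (η 0), sq_nonneg (η 2)]
  have sq03 : (η 0)^2 + (η 3)^2 ≤ 2*((η 0)^2 + (η 1)^2 + (η 2)^2 + (η 3)^2 + (η 4)^2) := by linarith [sq_nonneg (η 1), sq_nonneg (η 2), sq_nonneg (η 4), sq_nonneg (η 0), sq_nonneg (η 3)]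
  have sq23 : (η 2)^2 + (η 3)^2 ≤ 2*((η 0)^2 + (η 1)^2 + (η 2)^2 + (η 3)^2 + (η 4)^2) := by linarith [sq_nonneg (η 0), sq_nonneg (η 1), sq_nonneg (η 4), sq_nonneg (η 2), sq_nonneg (η 3)]
  have sq43 : (η 4)^2 + (η 3)^2 ≤ 2*((η 0)^2 + (η 1)^2 + (η 2)^2 + (η 3)^2 + (η 4)^2) := by linarith [sq_nonneg (η 0), sq_nonneg (η 1), sq_nonneg (η 2), sq_nonneg (η 4), sq_nonneg (η 3)]
  have d0 : (η 0)^2 ≤ ((η 0)^2 + (η 1)^2 + (η 2)^2 + (η 3)^2 + (η 4)^2) := by linarith [sq_nonneg (η 1), sq_nonneg (η 2), sq_nonneg (η 3), sq_nonneg (η 4)]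
  have d1 : (η 1)^2 ≤ ((η 0)^2 + (η 1)^2 + (η 2)^2 + (η 3)^2 + (η 4)^2) := by linarith [sq_nonneg (η 0), sq_nonneg (η 2), sq_nonneg (η 3), sq_nonneg (η 4)]
  have d3 : (η 3)^2 ≤ ((η 0)^2 + (η 1)^2 + (η 2)^2 + (η 3)^2 + (η 4)^2) := by linarith [sq_nonneg (η 0), sq_nonneg (η 1), sq_nonneg (η 2), sq_nonneg (η 4)]
  have hz1 := hdiag (z 1) (η 0) ((η 0)^2 + (η 1)^2 + (η 2)^2 + (η 3)^2 + (η 4)^2) d0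
  have hz0 := hdiag (z 0) (η 1) ((η 0)^2 + (η 1)^2 + (η 2)^2 + (η 3)^2 + (η 4)^2) d1
  have hz6 := hdiag (z 6) (η 3) ((η 0)^2 + (η 1)^2 + (η 2)^2 + (η 3)^2 + (η 4)^2) d3
  have hz2 := hcross (z 2) (η 0) (η 1) ((η 0)^2 + (η 1)^2 + (η 2)^2 + (η 3)^2 + (η 4)^2) sq01
  have hz3 := hcross (z 3) (η 0) (η 2) ((η 0)^2 + (η 1)^2 + (η 2)^2 + (η 3)^2 + (η 4)^2) sq02
  have hz4 := hcross (z 4) (η 0) (η 3) ((η 0)^2 + (η 1)^2 + (η 2)^2 + (η 3)^2 + (η 4)^2) sq03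
  have hz5 := hcross (z 5) (η 2) (η 3) ((η 0)^2 + (η 1)^2 + (η 2)^2 + (η 3)^2 + (η 4)^2) sq23
  have hz7 := hcross (z 7) (η 4) (η 3) ((η 0)^2 + (η 1)^2 + (η 2)^2 + (η 3)^2 + (η 4)^2) sq43
  have hzS : (|z 0| + |z 1| + |z 2| + |z 3| + |z 4| + |z 5| + |z 6| + |z 7|) * ((η 0)^2 + (η 1)^2 + (η 2)^2 + (η 3)^2 + (η 4)^2)
      < γ₁ * ((η 0)^2 + (η 1)^2 + (η 2)^2 + (η 3)^2 + (η 4)^2) := mul_lt_mul_of_pos_right hz hS0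
  constructor
  · rw [Fin.sum_univ_five]
    linarith [hM, m0, m1, m2, m3, m4, hz1.1, hz0.1, hz6.1, hz2.1, hz3.1, hz4.1, hz5.1, hz7.1, hzS]
  · rw [Fin.sum_univ_five]
    have hmax : max (8*l+1+γ₁) (4*l+6+γ₁) = max (8*l+1) (4*l+6) + γ₁ := by
      rw [max_add_add_right]
    have goal2 : max (8 * l + 1 + γ₁) (4 * l + 6 + γ₁) = max (8*l+1) (4*l+6) + γ₁ := hmax
    rw [goal2]
    linarith [hU, hz1.2, hz0.2, hz6.2, hz2.2, hz3.2, hz4.2, hz5.2, hz7.2, hzS]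
end
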